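/- arXiv:1803.04295 — 6 statements merged into one kernel-verified Lean document; each statement's English description precedes it below -/
import Mathlib

section
/- Let H and K be bounded self-adjoint operators on a complex Hilbert space with K = H - (·,u)u for some vector u (i.e., K is a rank-one perturbation of H by -(·,u)u). For s > 0, let E_H = Ker(H - s²I) and E_K = Ker(K - s²I). If u is not orthogonal to E_H, then u is orthogonal to E_K and E_K = E_H ∩ u^⊥. -/
/-!
Since `H - K = ⟪u, ·⟫ u` and `H` is symmetric, for an eigenvector `f` of `H` and an eigenvector `g`
of `K` with the same real eigenvalue, `⟪u, g⟫ ⟪f, u⟫ = ⟪f, (H - K) g⟫ = ⟪H f, g⟫ - ⟪f, K g⟫ = 0`.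
A single `f ∈ E_H` with `⟪u, f⟫ ≠ 0` therefore forces `E_K ⟂ u`, and on `u^⊥` the operators
`H` and `K` agree.
-/

namespace LinearMap

variable {𝕜 E : Type*} [RCLike 𝕜] [SeminormedAddCommGroup E] [InnerProductSpace 𝕜 E]
  {H K : E →ₗ[𝕜] E} {u : E}

theorem inner_mul_inner_eq_zero_of_eq_sub_rankOne (hH : H.IsSymmetric)
    (hK : ∀ f, K f = H f - inner 𝕜 u f • u) {r : ℝ} {f g : E}
    (hf : H f = (r : 𝕜) • f) (hg : K g = (r : 𝕜) • g) :
    inner 𝕜 u g * inner 𝕜 f u = 0 := by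
  have hHg : H g = (r : 𝕜) • g + inner 𝕜 u g • u := by
    rw [← hg, hK, sub_add_cancel]
  have := hH f g
  rw [hf, hHg, inner_smul_left, inner_add_right, inner_smul_right, inner_smul_right,
    RCLike.conj_ofReal] at this
  linear_combination -this

theorem apply_eq_of_eq_sub_rankOne (hK : ∀ f, K f = H f - inner 𝕜 u f • u) {g : E}
    (hg : inner 𝕜 u g = 0) : K g = H g := by
  rw [hK, hg, zero_smul, sub_zero]

end LinearMap

theorem schmidt_rank_one_H_dominant_general
    {E : Type*} [NormedAddCommGroup E] [InnerProductSpace ℂ E] [CompleteSpace E]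
    (H K : E →L[ℂ] E) (hHsa : IsSelfAdjoint H) (u : E)
    (hrank1 : ∀ f : E, K f = H f - (inner ℂ u f : ℂ) • u)
    (s : ℝ)
    (hdom : ∃ f : E, H f = ((s : ℂ) ^ 2) • f ∧ (inner ℂ u f : ℂ) ≠ 0) :
    (∀ g : E, K g = ((s : ℂ) ^ 2) • g → (inner ℂ u g : ℂ) = 0) ∧
    (∀ g : E, K g = ((s : ℂ) ^ 2) • g ↔ (H g = ((s : ℂ) ^ 2) • g ∧ (inner ℂ u g : ℂ) = 0)) := by
  obtain ⟨f, hf, hfu⟩ := hdom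
  rw [← Complex.ofReal_pow] at hf ⊢
  have hfu' : inner ℂ f u ≠ 0 := by rwa [← inner_conj_symm, map_ne_zero]
  have hperp : ∀ g : E, K g = ((s ^ 2 : ℝ) : ℂ) • g → inner ℂ u g = 0 := fun g hg =>
    (mul_eq_zero.mp (LinearMap.inner_mul_inner_eq_zero_of_eq_sub_rankOne (K := (K : E →ₗ[ℂ] E))
      hHsa.isSymmetric hrank1 hf hg)).resolve_right hfu'
  refine ⟨hperp, fun g => ⟨fun hg => ?_, fun ⟨hHg, hug⟩ => ?_⟩⟩
  · have hug := hperp g hg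
    exact ⟨(LinearMap.apply_eq_of_eq_sub_rankOne (K := (K : E →ₗ[ℂ] E)) hrank1 hug).symm.trans hg, hug⟩
  · exact (LinearMap.apply_eq_of_eq_sub_rankOne (K := (K : E →ₗ[ℂ] E)) hrank1 hug).trans hHg

/-- If `K = H - (·,u)u` are bounded self-adjoint operators, `s > 0`,
`E_H = Ker(H - s²I)`, `E_K = Ker(K - s²I)`, and `u` is not orthogonal to `E_H`,
then `u ⟂ E_K` and `E_K = E_H ∩ u^⊥`. -/
theorem schmidt_rank_one_H_dominant
    {E : Type*} [NormedAddCommGroup E] [InnerProductSpace ℂ E] [CompleteSpace E]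
    (H K : E →L[ℂ] E) (hHsa : IsSelfAdjoint H) (hKsa : IsSelfAdjoint K) (u : E)
    (hrank1 : ∀ f : E, K f = H f - (inner ℂ u f : ℂ) • u)
    (s : ℝ) (hs : 0 < s)
    (hdom : ∃ f : E, H f = ((s : ℂ) ^ 2) • f ∧ (inner ℂ u f : ℂ) ≠ 0) :
    (∀ g : E, K g = ((s : ℂ) ^ 2) • g → (inner ℂ u g : ℂ) = 0) ∧
    (∀ g : E, K g = ((s : ℂ) ^ 2) • g ↔ (H g = ((s : ℂ) ^ 2) • g ∧ (inner ℂ u g : ℂ) = 0)) :=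
  schmidt_rank_one_H_dominant_general H K hHsa u hrank1 s hdom
end

section
/- Let H and K be bounded self-adjoint operators on a complex Hilbert space with K = H - (·,u)u. For s > 0, let E_H = Ker(H - s²I) and E_K = Ker(K - s²I). If u is not orthogonal to E_K, then u is orthogonal to E_H and E_H = E_K ∩ u^⊥. -/
open ComplexConjugate

/-! If `K = H - ⟪u, ·⟫ u` with `K` symmetric, `K f = μ f` and `H g = μ g` for a real `μ`, then
`⟪f, K g⟫ = ⟪K f, g⟫` expands to `⟪u, g⟫ ⟪f, u⟫ = 0`. So as soon as one eigenvector `f` of `K`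
is not orthogonal to `u`, every eigenvector of `H` for the same eigenvalue is orthogonal to `u`,
and on `u^⊥` the operators `H` and `K` agree. -/

section RankOnePerturbation

variable {𝕜 E : Type*} [RCLike 𝕜] [NormedAddCommGroup E] [InnerProductSpace 𝕜 E]
  {H K : E →ₗ[𝕜] E} {u : E} {μ : 𝕜}

theorem inner_mul_inner_eq_zero_of_sub_rankOne (hK : K.IsSymmetric)
    (hKH : ∀ f, K f = H f - inner 𝕜 u f • u) (hμ : conj μ = μ) {f g : E}
    (hf : K f = μ • f) (hg : H g = μ • g) : inner 𝕜 u g * inner 𝕜 f u = 0 := by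
  have hsym : inner 𝕜 (K f) g = inner 𝕜 f (K g) := hK f g
  rw [hf, hKH g, hg, inner_smul_left, inner_sub_right, inner_smul_right, inner_smul_right,
    hμ] at hsym
  linear_combination hsym

theorem inner_eq_zero_of_sub_rankOne (hK : K.IsSymmetric)
    (hKH : ∀ f, K f = H f - inner 𝕜 u f • u) (hμ : conj μ = μ) {f g : E}
    (hf : K f = μ • f) (hfu : inner 𝕜 u f ≠ 0) (hg : H g = μ • g) : inner 𝕜 u g = 0 := by
  have hfu' : inner 𝕜 f u ≠ 0 := by
    rwa [← inner_conj_symm, map_ne_zero]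
  exact (mul_eq_zero.mp (inner_mul_inner_eq_zero_of_sub_rankOne hK hKH hμ hf hg)).resolve_right
    hfu'

theorem apply_eq_smul_iff_of_sub_rankOne (hKH : ∀ f, K f = H f - inner 𝕜 u f • u) {g : E}
    (horth : H g = μ • g → inner 𝕜 u g = 0) :
    H g = μ • g ↔ K g = μ • g ∧ inner 𝕜 u g = 0 := by
  constructor
  · intro hg
    have hug := horth hg
    exact ⟨by rw [hKH, hg, hug, zero_smul, sub_zero], hug⟩
  · rintro ⟨hKg, hug⟩
    rwa [hKH, hug, zero_smul, sub_zero] at hKg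

end RankOnePerturbation

theorem schmidt_rank_one_K_dominant_general
    {E : Type*} [NormedAddCommGroup E] [InnerProductSpace ℂ E] [CompleteSpace E]
    (H K : E →L[ℂ] E) (hKsa : IsSelfAdjoint K) (u : E)
    (hrank1 : ∀ f : E, K f = H f - (inner ℂ u f : ℂ) • u)
    (s : ℝ)
    (hdom : ∃ f : E, K f = ((s : ℂ) ^ 2) • f ∧ (inner ℂ u f : ℂ) ≠ 0) :
    (∀ g : E, H g = ((s : ℂ) ^ 2) • g → (inner ℂ u g : ℂ) = 0) ∧
    (∀ g : E, H g = ((s : ℂ) ^ 2) • g ↔ (K g = ((s : ℂ) ^ 2) • g ∧ (inner ℂ u g : ℂ) = 0)) := by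
  obtain ⟨f, hf, hfu⟩ := hdom
  have hreal : conj ((s : ℂ) ^ 2) = (s : ℂ) ^ 2 := by
    rw [map_pow, Complex.conj_ofReal]
  have horth : ∀ g : E, H g = ((s : ℂ) ^ 2) • g → inner ℂ u g = 0 := fun g hg =>
    inner_eq_zero_of_sub_rankOne (H := (H : E →ₗ[ℂ] E)) hKsa.isSymmetric hrank1 hreal hf hfu hg
  exact ⟨horth, fun g => apply_eq_smul_iff_of_sub_rankOne (H := (H : E →ₗ[ℂ] E)) hrank1 (horth g)⟩

/-- If `K = H - (·,u)u` are bounded self-adjoint operators, `s > 0`,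
`E_H = Ker(H - s²I)`, `E_K = Ker(K - s²I)`, and `u` is not orthogonal to `E_K`,
then `u ⟂ E_H` and `E_H = E_K ∩ u^⊥`. -/
theorem schmidt_rank_one_K_dominant
    {E : Type*} [NormedAddCommGroup E] [InnerProductSpace ℂ E] [CompleteSpace E]
    (H K : E →L[ℂ] E) (hHsa : IsSelfAdjoint H) (hKsa : IsSelfAdjoint K) (u : E)
    (hrank1 : ∀ f : E, K f = H f - (inner ℂ u f : ℂ) • u)
    (s : ℝ) (hs : 0 < s)
    (hdom : ∃ f : E, K f = ((s : ℂ) ^ 2) • f ∧ (inner ℂ u f : ℂ) ≠ 0) :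
    (∀ g : E, H g = ((s : ℂ) ^ 2) • g → (inner ℂ u g : ℂ) = 0) ∧
    (∀ g : E, H g = ((s : ℂ) ^ 2) • g ↔ (K g = ((s : ℂ) ^ 2) • g ∧ (inner ℂ u g : ℂ) = 0)) :=
  schmidt_rank_one_K_dominant_general H K hKsa u hrank1 s hdom
end

section
/- Let p be a holomorphic function on the unit disk and F a subset of H²(𝕋) such that for every f ∈ F, pf ∈ H²(𝕋) and ‖p S*f‖² = ‖pf‖² - |f(0)|² for all f ∈ F, with F closed under S*. Then ‖pf‖ ≥ ‖f‖ for all f ∈ F. -/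
open ComplexConjugate

noncomputable section

/-- The `n`-th Taylor coefficient of the product `p·f` (Cauchy product of coefficient
sequences), modelling multiplication of a holomorphic function `p` on the disk with a
Hardy-space function `f` identified with its coefficient sequence. -/
def convSeq (p f : ℕ → ℂ) (n : ℕ) : ℂ := ∑ k ∈ Finset.range (n + 1), p k * f (n - k)

/-- Let `p` be holomorphic on the unit disk and `F ⊆ H²` (sequence model)
closed under the backward shift `S*`, such that for every `f ∈ F` the product `pf` is again
in `H²` and `‖p S*f‖² = ‖pf‖² - |f(0)|²`. Then `‖pf‖ ≥ ‖f‖` for all `f ∈ F`. -/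
theorem isometric_multiplier_lower_bound
    (p : ℕ → ℂ)
    (hp : ∀ z : ℂ, ‖z‖ < 1 → Summable fun n => p n * z ^ n)
    (F : Set (lp (fun _ : ℕ => ℂ) 2))
    (hshift : ∀ f ∈ F, ∀ g : lp (fun _ : ℕ => ℂ) 2,
      (∀ n : ℕ, g n = f (n + 1)) → g ∈ F)
    (hmul : ∀ f ∈ F, Memℓp (convSeq p ⇑f) 2)
    (hid : ∀ f ∈ F,
      (∑' n : ℕ, ‖convSeq p (fun m => f (m + 1)) n‖ ^ 2) =
        (∑' n : ℕ, ‖convSeq p (⇑f) n‖ ^ 2) - ‖f 0‖ ^ 2) :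
    ∀ f ∈ F, (∑' n : ℕ, ‖f n‖ ^ 2) ≤ ∑' n : ℕ, ‖convSeq p (⇑f) n‖ ^ 2 := by
  have hrpow : ∀ x : ℝ, x ^ ((2 : ENNReal).toReal) = x ^ 2 := by
    intro x
    rw [show ((2 : ENNReal).toReal) = ((2 : ℕ) : ℝ) by norm_num, Real.rpow_natCast]
  have key : ∀ N : ℕ, ∀ f ∈ F,
      (∑ n ∈ Finset.range N, ‖f n‖ ^ 2) ≤ ∑' n : ℕ, ‖convSeq p (⇑f) n‖ ^ 2 := by
    intro N
    induction N with
    | zero =>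
      intro f hf
      simp only [Finset.range_zero, Finset.sum_empty]
      exact tsum_nonneg fun n => by positivity
    | succ N ih =>
      intro f hf
      have hsum : Summable fun n : ℕ => ‖f (n + 1)‖ ^ ((2 : ENNReal).toReal) :=
        ((lp.memℓp f).summable (by norm_num)).comp_injective (add_left_injective 1)
      have hg : Memℓp (fun n : ℕ => f (n + 1)) 2 :=
        memℓp_gen hsum
      set g : lp (fun _ : ℕ => ℂ) 2 := ⟨fun n : ℕ => f (n + 1), hg⟩ with hgdef
      have hgF : g ∈ F := hshift f hf g fun n => rfl
      have hcoe : ⇑g = fun m : ℕ => f (m + 1) := rfl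
      have h1 := ih g hgF
      rw [hcoe] at h1
      have h2 := hid f hf
      have h3 : (∑ n ∈ Finset.range (N + 1), ‖f n‖ ^ 2) =
          (∑ n ∈ Finset.range N, ‖f (n + 1)‖ ^ 2) + ‖f 0‖ ^ 2 :=
        Finset.sum_range_succ' _ N
      have h4 : (∑ n ∈ Finset.range N, ‖g n‖ ^ 2) =
          ∑ n ∈ Finset.range N, ‖f (n + 1)‖ ^ 2 := rfl
      rw [h4] at h1
      linarith [h1, h2, h3]
  intro f hf
  have hsummable : Summable fun n : ℕ => ‖f n‖ ^ 2 := by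
    have := (lp.memℓp f).summable (p := 2) (by norm_num)
    simpa only [hrpow] using this
  exact Summable.tsum_le_of_sum_range_le hsummable (fun n => key n f hf)

end
end

section
/- Let u ∈ BMOA(𝕋), H_u the anti-linear Hankel operator, s > 0, and suppose s is H-dominant, i.e., u is not orthogonal to E_H(s) = Ker(H_u² - s²I). Then S(E_H(s) ∩ u^⊥) = E_H(s) ∩ 1^⊥, where S is the shift operator and 1 the constant function. -/
/-!
With `S` the shift, `K_u = S* H_u = H_u S` satisfies `K_u² = H_u² - ⟪·, u⟫ u`. Hence, for
`f ∈ E_H(s) ∩ u^⊥`, `H_u² (S f) - s² S f` is a constant, and conversely, for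
`S f ∈ E_H(s) ∩ 1^⊥`, `H_u² f - s² f = ⟪u, f⟫ u`. Since `H_u²` is self-adjoint on the Hardy space,
either defect is orthogonal to the `s²`-eigenspace of `H_u²`. If `f₀` is an eigenvector with
`⟪u, f₀⟫ ≠ 0`, so is `H_u f₀`, and `⟪H_u f₀, 1⟫ = ⟪u, f₀⟫`; pairing the defect with `H_u f₀`,
respectively with `f₀`, shows that it vanishes.
-/

open MeasureTheory Complex Real ComplexConjugate AddCircle

noncomputable section

instance fact2pi : Fact (0 < 2 * π) := ⟨by positivity⟩

abbrev Tc : Type := AddCircle (2 * π)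

abbrev haarT : Measure Tc := haarAddCircle

abbrev HL2 : Type := Lp ℂ 2 haarT

def IsHardy (f : HL2) : Prop := ∀ n : ℤ, n < 0 → fourierCoeff (⇑f) n = 0

def IsHardyFun (u : Tc → ℂ) : Prop := ∀ n : ℤ, n < 0 → fourierCoeff u n = 0

def IsInnerF (θ : Tc → ℂ) : Prop :=
  AEStronglyMeasurable θ haarT ∧ (∀ᵐ x ∂haarT, ‖θ x‖ = 1) ∧ IsHardyFun θ

def IsHankelOp (u : Tc → ℂ) (H : HL2 → HL2) : Prop :=
  MemLp u 2 haarT ∧ IsHardyFun u ∧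
  (∃ C : ℝ, ∀ f, ‖H f‖ ≤ C * ‖f‖) ∧
  (∀ f g, H (f + g) = H f + H g) ∧
  (∀ (c : ℂ) (f : HL2), H (c • f) = conj c • H f) ∧
  (∀ f, IsHardy (H f)) ∧
  (∀ f g : HL2, IsHardy g →
    Integrable (fun x => u x * conj (f x) * conj (g x)) haarT →
    (inner ℂ g (H f) : ℂ) = ∫ x, u x * conj (f x) * conj (g x) ∂haarT)

def IsShiftAdjOf (H K : HL2 → HL2) : Prop :=
  ∀ f, IsHardy (K f) ∧
    ∀ n : ℤ, 0 ≤ n → fourierCoeff (⇑(K f)) n = fourierCoeff (⇑(H f)) (n + 1)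

def IsSzego (P : HL2 →L[ℂ] HL2) : Prop :=
  (∀ f, IsHardy (P f)) ∧ ∀ f g : HL2, IsHardy g → (inner ℂ g (f - P f) : ℂ) = 0

def MemKz (θ : Tc → ℂ) (f : HL2) : Prop :=
  IsHardy f ∧ ∀ h w : HL2, IsHardy h →
    (⇑w =ᵐ[haarT] fun x => fourier 1 x * θ x * h x) → (inner ℂ w f : ℂ) = 0

def MemK (θ : Tc → ℂ) (f : HL2) : Prop :=
  IsHardy f ∧ ∀ h w : HL2, IsHardy h →
    (⇑w =ᵐ[haarT] fun x => θ x * h x) → (inner ℂ w f : ℂ) = 0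

open scoped InnerProductSpace

lemma fourierCoeff_zero_eq_integral (f : Tc → ℂ) : fourierCoeff f 0 = ∫ x, f x ∂haarT := by
  simp [fourierCoeff]

namespace HL2

lemma fourierCoeff_eq_inner (f : HL2) (n : ℤ) :
    fourierCoeff (⇑f) n = ⟪(fourierLp 2 n : HL2), f⟫_ℂ := by
  rw [← fourierBasis_repr, fourierBasis.repr_apply_apply, coe_fourierBasis]

lemma ext_fourierCoeff {f g : HL2} (h : ∀ n, fourierCoeff (⇑f) n = fourierCoeff (⇑g) n) :
    f = g :=
  fourierBasis.repr.injective <| lp.ext <| funext fun n => by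
    rw [fourierBasis_repr, fourierBasis_repr, h]

lemma fourierCoeff_add (f g : HL2) (n : ℤ) :
    fourierCoeff (⇑(f + g)) n = fourierCoeff (⇑f) n + fourierCoeff (⇑g) n := by
  simp only [fourierCoeff_eq_inner, inner_add_right]

lemma fourierCoeff_smul (c : ℂ) (f : HL2) (n : ℤ) :
    fourierCoeff (⇑(c • f)) n = c * fourierCoeff (⇑f) n := by
  simp only [fourierCoeff_eq_inner, inner_smul_right]

lemma fourierCoeff_fourierLp (k n : ℤ) :
    fourierCoeff (⇑(fourierLp 2 k : HL2)) n = if n = k then 1 else 0 := by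
  rw [fourierCoeff_eq_inner]
  exact orthonormal_iff_ite.mp orthonormal_fourier n k

lemma memLp_fourier_mul (k : ℤ) (f : HL2) :
    MemLp (fun x => fourier k x * f x) 2 haarT :=
  (Lp.memLp f).of_le_mul (c := 1)
    ((map_continuous (fourier k)).aestronglyMeasurable.mul (Lp.aestronglyMeasurable f))
    (Filter.Eventually.of_forall fun x => by
      rw [norm_mul, fourier_apply, Circle.norm_coe])

/-- `mulFourier 1` is the shift `S`. -/
def mulFourier (k : ℤ) (f : HL2) : HL2 := (memLp_fourier_mul k f).toLp _

lemma coeFn_mulFourier (k : ℤ) (f : HL2) :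
    ⇑(mulFourier k f) =ᵐ[haarT] fun x => fourier k x * f x :=
  MemLp.coeFn_toLp _

lemma eq_mulFourier_of_ae {k : ℤ} {f g : HL2} (h : ⇑g =ᵐ[haarT] fun x => fourier k x * f x) :
    g = mulFourier k f :=
  Lp.ext (h.trans (coeFn_mulFourier k f).symm)

lemma fourierCoeff_mulFourier (k : ℤ) (f : HL2) (n : ℤ) :
    fourierCoeff (⇑(mulFourier k f)) n = fourierCoeff (⇑f) (n - k) := by
  rw [fourierCoeff_congr_ae (coeFn_mulFourier k f)]
  refine integral_congr_ae (Filter.Eventually.of_forall fun x => ?_)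
  simp only [smul_eq_mul]
  rw [show -(n - k) = -n + k by ring, fourier_add]
  ring

lemma mulFourier_mulFourier (k l : ℤ) (f : HL2) :
    mulFourier k (mulFourier l f) = mulFourier (k + l) f :=
  ext_fourierCoeff fun n => by simp only [fourierCoeff_mulFourier, sub_sub]

lemma mulFourier_zero (f : HL2) : mulFourier 0 f = f :=
  ext_fourierCoeff fun n => by rw [fourierCoeff_mulFourier, sub_zero]

lemma mulFourier_fourierLp (k n : ℤ) :
    mulFourier k (fourierLp 2 n : HL2) = fourierLp 2 (k + n) :=
  ext_fourierCoeff fun m => by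
    simp only [fourierCoeff_mulFourier, fourierCoeff_fourierLp, sub_eq_iff_eq_add, add_comm n]

end HL2

open HL2

lemma isHardy_fourierLp {k : ℤ} (hk : 0 ≤ k) : IsHardy (fourierLp 2 k : HL2) := fun n hn => by
  rw [fourierCoeff_fourierLp, if_neg (by omega)]

namespace IsHardy

variable {f g : HL2}

lemma add (hf : IsHardy f) (hg : IsHardy g) : IsHardy (f + g) := fun n hn => by
  rw [fourierCoeff_add, hf n hn, hg n hn, add_zero]

lemma smul (c : ℂ) (hf : IsHardy f) : IsHardy (c • f) := fun n hn => by
  rw [fourierCoeff_smul, hf n hn, mul_zero]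

lemma mulFourier {k : ℤ} (hf : IsHardy f) (hk : 0 ≤ k) : IsHardy (mulFourier k f) :=
  fun n hn => by rw [fourierCoeff_mulFourier, hf _ (by omega)]

lemma mulFourier_neg_one (hf : IsHardy f) (hf0 : fourierCoeff (⇑f) 0 = 0) :
    IsHardy (HL2.mulFourier (-1) f) := fun n hn => by
  rw [fourierCoeff_mulFourier, sub_neg_eq_add]
  rcases (show n + 1 < 0 ∨ n + 1 = 0 by omega) with h | h
  · exact hf _ h
  · rwa [h]

lemma ext (hf : IsHardy f) (hg : IsHardy g)
    (h : ∀ n, 0 ≤ n → fourierCoeff (⇑f) n = fourierCoeff (⇑g) n) : f = g :=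
  ext_fourierCoeff fun n => (lt_or_ge n 0).elim (fun hn => by rw [hf n hn, hg n hn]) (h n)

end IsHardy

lemma integrable_mul_conj_mul_conj_fourierLp (u f : HL2) (n : ℤ) :
    Integrable (fun x => u x * conj (f x) * conj ((fourierLp 2 n : HL2) x)) haarT := by
  have huf : Integrable (fun x => conj (f x) * u x) haarT := by
    simpa only [RCLike.inner_apply'] using L2.integrable_inner (𝕜 := ℂ) f u
  refine (huf.fourier_smul (-n)).congr ?_
  filter_upwards [coeFn_fourierLp 2 n] with x hx
  rw [hx, ← fourier_neg, smul_eq_mul]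
  ring

namespace IsHankelOp

variable {u : HL2} {H : HL2 → HL2} (hH : IsHankelOp (⇑u) H)
include hH

def toCLM : HL2 →L⋆[ℂ] HL2 :=
  LinearMap.mkContinuousOfExistsBound
    { toFun := H, map_add' := hH.2.2.2.1, map_smul' := hH.2.2.2.2.1 } hH.2.2.1

lemma coe_toCLM : ⇑hH.toCLM = H := rfl

lemma map_add (f g : HL2) : H (f + g) = H f + H g := hH.2.2.2.1 f g

lemma map_smul (c : ℂ) (f : HL2) : H (c • f) = conj c • H f := hH.2.2.2.2.1 c f

lemma isHardy (f : HL2) : IsHardy (H f) := hH.2.2.2.2.2.1 f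

lemma inner_eq_integral (f : HL2) {g : HL2} (hg : IsHardy g)
    (hint : Integrable (fun x => u x * conj (f x) * conj (g x)) haarT) :
    ⟪g, H f⟫_ℂ = ∫ x, u x * conj (f x) * conj (g x) ∂haarT :=
  hH.2.2.2.2.2.2 f g hg hint

lemma inner_fourierLp_eq_integral (f : HL2) {n : ℤ} (hn : 0 ≤ n) :
    ⟪(fourierLp 2 n : HL2), H f⟫_ℂ =
      ∫ x, u x * conj (f x) * conj ((fourierLp 2 n : HL2) x) ∂haarT :=
  hH.inner_eq_integral f (isHardy_fourierLp hn) (integrable_mul_conj_mul_conj_fourierLp u f n)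

lemma fourierCoeff_hankel (f : HL2) {n : ℤ} (hn : 0 ≤ n) :
    fourierCoeff (⇑(H f)) n = ⟪mulFourier n f, u⟫_ℂ := by
  rw [fourierCoeff_eq_inner, hH.inner_fourierLp_eq_integral f hn, L2.inner_def]
  refine integral_congr_ae ?_
  filter_upwards [coeFn_mulFourier n f, coeFn_fourierLp 2 n] with x hf he
  rw [hf, he, RCLike.inner_apply', map_mul, ← fourier_neg]
  ring

lemma fourierCoeff_hankel_zero (f : HL2) : fourierCoeff (⇑(H f)) 0 = ⟪f, u⟫_ℂ := by
  rw [hH.fourierCoeff_hankel f le_rfl, mulFourier_zero]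

lemma inner_hankel_fourierLp_zero (f : HL2) : ⟪H f, fourierLp 2 0⟫_ℂ = ⟪u, f⟫_ℂ := by
  rw [← inner_conj_symm, ← fourierCoeff_eq_inner, hH.fourierCoeff_hankel_zero, inner_conj_symm]

lemma fourierCoeff_hankel_mulFourier_one (f : HL2) {n : ℤ} (hn : 0 ≤ n) :
    fourierCoeff (⇑(H (mulFourier 1 f))) n = fourierCoeff (⇑(H f)) (n + 1) := by
  rw [hH.fourierCoeff_hankel _ hn, hH.fourierCoeff_hankel _ (by omega), mulFourier_mulFourier]

lemma hankel_fourierLp_zero (hu : IsHardy u) : H (fourierLp 2 0) = u :=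
  IsHardy.ext (hH.isHardy _) hu fun n hn => by
    rw [hH.fourierCoeff_hankel _ hn, mulFourier_fourierLp, add_zero, ← fourierCoeff_eq_inner]

lemma inner_hankel_fourierLp {g : HL2} (hg : IsHardy g) {n : ℤ} (hn : 0 ≤ n) :
    ⟪g, H (fourierLp 2 n)⟫_ℂ = ⟪(fourierLp 2 n : HL2), H g⟫_ℂ := by
  have hint := (integrable_mul_conj_mul_conj_fourierLp u g n).congr
    (Filter.Eventually.of_forall fun x => mul_right_comm (u x) _ _)
  rw [hH.inner_fourierLp_eq_integral g hn, hH.inner_eq_integral _ hg hint]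
  simp only [mul_right_comm]

/-- Both sides are continuous and conjugate-linear in `f`, and they agree on the characters
`e_n`, `n ≥ 0`, which span the Hardy space. -/
lemma inner_hankel_comm {f g : HL2} (hf : IsHardy f) (hg : IsHardy g) :
    ⟪g, H f⟫_ℂ = ⟪f, H g⟫_ℂ := by
  have hl := (hasSum_fourier_series_L2 f).mapL ((innerSL ℂ g).comp hH.toCLM)
  have hr := ((hasSum_fourier_series_L2 f).mapL (innerSL ℂ (H g))).star
  simp only [ContinuousLinearMap.comp_apply, innerSL_apply_apply, coe_toCLM, hH.map_smul,
    inner_smul_right, star_mul', Complex.star_def, inner_conj_symm] at hl hr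
  refine hl.unique (hr.congr_fun fun n => ?_)
  rcases lt_or_ge n 0 with hn | hn
  · simp [hf n hn]
  · rw [hH.inner_hankel_fourierLp hg hn]

lemma inner_hankel_sq_comm {f g : HL2} (hf : IsHardy f) (hg : IsHardy g) :
    ⟪g, H (H f)⟫_ℂ = ⟪H (H g), f⟫_ℂ := by
  rw [hH.inner_hankel_comm (hH.isHardy f) hg, ← inner_conj_symm,
    hH.inner_hankel_comm hf (hH.isHardy g), inner_conj_symm]

lemma hankel_eq_mulFourier_one_add (f : HL2) :
    H f = mulFourier 1 (H (mulFourier 1 f)) + ⟪f, u⟫_ℂ • fourierLp 2 0 := by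
  refine IsHardy.ext (hH.isHardy f)
    (((hH.isHardy _).mulFourier zero_le_one).add ((isHardy_fourierLp le_rfl).smul _))
    fun n hn => ?_
  rw [fourierCoeff_add, fourierCoeff_smul, fourierCoeff_fourierLp, fourierCoeff_mulFourier]
  rcases hn.eq_or_lt with rfl | hn
  · rw [hH.fourierCoeff_hankel_zero, hH.isHardy _ _ (by norm_num), if_pos rfl, zero_add, mul_one]
  · rw [hH.fourierCoeff_hankel_mulFourier_one f (by omega), sub_add_cancel, if_neg hn.ne',
      mul_zero, add_zero]

/-- The identity `K_u² = H_u² - ⟪·, u⟫ u` for `K_u = S* H_u = H_u S`, read on coefficients. -/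
lemma fourierCoeff_hankel_sq_mulFourier_one (hu : IsHardy u) (f : HL2) {n : ℤ} (hn : 0 ≤ n) :
    fourierCoeff (⇑(H (H (mulFourier 1 f)))) (n + 1) + ⟪u, f⟫_ℂ * fourierCoeff (⇑u) n =
      fourierCoeff (⇑(H (H f))) n := by
  conv_rhs => rw [hH.hankel_eq_mulFourier_one_add f, hH.map_add, hH.map_smul,
    hH.hankel_fourierLp_zero hu, fourierCoeff_add, fourierCoeff_smul,
    hH.fourierCoeff_hankel_mulFourier_one _ hn, inner_conj_symm]

lemma hankel_sq_hankel_eq_smul {f : HL2} {μ : ℝ} (h : H (H f) = (μ : ℂ) • f) :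
    H (H (H f)) = (μ : ℂ) • H f := by
  rw [h, hH.map_smul, Complex.conj_ofReal]

/-- Pair the second equation with `a`: `H²` is self-adjoint on the Hardy space and `μ` is real. -/
lemma mul_inner_eq_zero_of_hankel_sq_eq {a f v : HL2} {μ : ℝ} {c : ℂ} (ha : IsHardy a)
    (hf : IsHardy f) (hHa : H (H a) = (μ : ℂ) • a) (hHf : H (H f) = (μ : ℂ) • f + c • v) :
    c * ⟪a, v⟫_ℂ = 0 := by
  have h := hH.inner_hankel_sq_comm hf ha
  rw [hHf, hHa, inner_add_right, inner_smul_right, inner_smul_right, inner_smul_left,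
    Complex.conj_ofReal] at h
  exact add_eq_left.mp h

lemma hankel_sq_mulFourier_one_eq_add (hu : IsHardy u) {f : HL2} {μ : ℝ} (hf : IsHardy f)
    (hHf : H (H f) = (μ : ℂ) • f) (hfu : ⟪u, f⟫_ℂ = 0) :
    H (H (mulFourier 1 f)) = (μ : ℂ) • mulFourier 1 f +
      fourierCoeff (⇑(H (H (mulFourier 1 f)))) 0 • fourierLp 2 0 := by
  refine IsHardy.ext (hH.isHardy _)
    (((hf.mulFourier zero_le_one).smul _).add ((isHardy_fourierLp le_rfl).smul _))
    fun n hn => ?_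
  rw [fourierCoeff_add, fourierCoeff_smul, fourierCoeff_smul, fourierCoeff_fourierLp,
    fourierCoeff_mulFourier]
  rcases hn.eq_or_lt with rfl | hn
  · rw [hf _ (by norm_num), if_pos rfl, mul_zero, zero_add, mul_one]
  · have h := hH.fourierCoeff_hankel_sq_mulFourier_one hu f (n := n - 1) (by omega)
    rw [sub_add_cancel, hHf, hfu, zero_mul, add_zero, fourierCoeff_smul] at h
    rw [h, if_neg hn.ne', mul_zero, add_zero]

lemma hankel_sq_eq_add_of_mulFourier_one (hu : IsHardy u) {f : HL2} {μ : ℝ} (hf : IsHardy f)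
    (hHf : H (H (mulFourier 1 f)) = (μ : ℂ) • mulFourier 1 f) :
    H (H f) = (μ : ℂ) • f + ⟪u, f⟫_ℂ • u := by
  refine IsHardy.ext (hH.isHardy _) ((hf.smul _).add (hu.smul _)) fun n hn => ?_
  rw [← hH.fourierCoeff_hankel_sq_mulFourier_one hu f hn, hHf, fourierCoeff_add,
    fourierCoeff_smul, fourierCoeff_smul, fourierCoeff_smul, fourierCoeff_mulFourier,
    add_sub_cancel_right]

end IsHankelOp

theorem shift_maps_EK_onto_EH_perp_one_general
    (u : HL2) (hu : IsHardy u) (H : HL2 → HL2) (hH : IsHankelOp (⇑u) H)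
    (s : ℝ)
    (hdom : ∃ f : HL2, IsHardy f ∧ H (H f) = ((s : ℂ) ^ 2) • f ∧ (inner ℂ u f : ℂ) ≠ 0) :
    {g : HL2 | ∃ f : HL2,
        (IsHardy f ∧ H (H f) = ((s : ℂ) ^ 2) • f ∧ (inner ℂ u f : ℂ) = 0) ∧
        ⇑g =ᵐ[haarT] fun x => fourier 1 x * f x} =
    {g : HL2 | IsHardy g ∧ H (H g) = ((s : ℂ) ^ 2) • g ∧ (∫ x, g x ∂haarT) = 0} := by
  obtain ⟨f₀, hf₀, hHf₀, hf₀u⟩ := hdom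
  simp only [← Complex.ofReal_pow] at hHf₀ ⊢
  ext g
  constructor
  · rintro ⟨f, ⟨hf, hHf, hfu⟩, hg⟩
    obtain rfl := eq_mulFourier_of_ae hg
    have hHSf := hH.hankel_sq_mulFourier_one_eq_add hu hf hHf hfu
    have hB := hH.mul_inner_eq_zero_of_hankel_sq_eq (hH.isHardy f₀) (hf.mulFourier zero_le_one)
      (hH.hankel_sq_hankel_eq_smul hHf₀) hHSf
    rw [hH.inner_hankel_fourierLp_zero] at hB
    refine ⟨hf.mulFourier zero_le_one, ?_, ?_⟩
    · rw [hHSf, (mul_eq_zero.mp hB).resolve_right hf₀u, zero_smul, add_zero]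
    · rw [← fourierCoeff_zero_eq_integral, fourierCoeff_mulFourier]
      exact hf _ (by norm_num)
  · rintro ⟨hg, hHg, hg0⟩
    rw [← fourierCoeff_zero_eq_integral] at hg0
    have hf := IsHardy.mulFourier_neg_one hg hg0
    have hgf : g = mulFourier 1 (mulFourier (-1) g) := by
      rw [mulFourier_mulFourier, add_neg_cancel, mulFourier_zero]
    generalize mulFourier (-1) g = f at hf hgf
    subst hgf
    have hHf := hH.hankel_sq_eq_add_of_mulFourier_one hu hf hHg
    have hfu := hH.mul_inner_eq_zero_of_hankel_sq_eq hf₀ hf hHf₀ hHf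
    have hf₀u' : ⟪f₀, u⟫_ℂ ≠ 0 := by rwa [← inner_conj_symm, map_ne_zero]
    have hfu' := (mul_eq_zero.mp hfu).resolve_right hf₀u'
    rw [hfu', zero_smul, add_zero] at hHf
    exact ⟨f, ⟨hf, hHf, hfu'⟩, coeFn_mulFourier 1 f⟩

/-- in the `H`-dominant case, the shift `S` maps `E_H(s) ∩ u^⊥` onto
`E_H(s) ∩ 𝟙^⊥`. -/
theorem shift_maps_EK_onto_EH_perp_one
    (u : HL2) (hu : IsHardy u) (H : HL2 → HL2) (hH : IsHankelOp (⇑u) H)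
    (s : ℝ) (hs : 0 < s)
    (hdom : ∃ f : HL2, IsHardy f ∧ H (H f) = ((s : ℂ) ^ 2) • f ∧ (inner ℂ u f : ℂ) ≠ 0) :
    {g : HL2 | ∃ f : HL2,
        (IsHardy f ∧ H (H f) = ((s : ℂ) ^ 2) • f ∧ (inner ℂ u f : ℂ) = 0) ∧
        ⇑g =ᵐ[haarT] fun x => fourier 1 x * f x} =
    {g : HL2 | IsHardy g ∧ H (H g) = ((s : ℂ) ^ 2) • g ∧ (∫ x, g x ∂haarT) = 0} :=
  shift_maps_EK_onto_EH_perp_one_general u hu H hH s hdom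
end
end

section
/- Let u ∈ BMOA(𝕋) with ‖H_u‖ = s > 0 and E_H(s) = Ker(H_u² - s²I) ≠ {0}. If f ∈ E_H(s) and a is an inner divisor of f (i.e., f = a f₀ with f₀ ∈ H²(𝕋) and a inner), then f₀ ∈ E_H(s) and H_u f₀ = T_a H_u f. -/
open MeasureTheory Complex Real ComplexConjugate AddCircle

noncomputable section

/-! Multiplication by an inner function `a` intertwines the Hankel operator with the Toeplitz
operator of `conj a`: `H_u (a h) = P (conj a · H_u h)`, because testing against `e_n` turns both
sides into `⟨a e_n, H_u h⟩`. For `f = a f₀` this gives `H_u f = P (conj a · H_u f₀)`, and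
`‖H_u f‖ = s ‖f‖ = s ‖f₀‖ ≥ ‖H_u f₀‖ = ‖conj a · H_u f₀‖`: the projection does not shrink
`conj a · H_u f₀`, so it fixes it and `H_u f₀ = a · H_u f`. Intertwining once more,
`H_u² f₀ = P (conj a · H_u² f) = P (s² f₀) = s² f₀`. -/

section LpMultiplier

variable {α : Type*} [MeasurableSpace α] {μ : Measure α} {p : ENNReal}

lemma exists_ae_eq_mul_of_norm_le_one {b : α → ℂ} (hb : AEStronglyMeasurable b μ)
    (hb1 : ∀ᵐ t ∂μ, ‖b t‖ ≤ 1) (x : Lp ℂ p μ) :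
    ∃ w : Lp ℂ p μ, ⇑w =ᵐ[μ] fun t => b t * x t := by
  have hbx : MemLp (fun t => b t * x t) p μ := by
    refine (Lp.memLp x).of_le (hb.mul (Lp.aestronglyMeasurable x)) ?_
    filter_upwards [hb1] with t ht
    rw [norm_mul]
    exact mul_le_of_le_one_left (norm_nonneg _) ht
  exact ⟨hbx.toLp _, hbx.coeFn_toLp⟩

lemma norm_eq_of_ae_eq_mul {b : α → ℂ} (hb : ∀ᵐ t ∂μ, ‖b t‖ = 1) {x w : Lp ℂ p μ}
    (hw : ⇑w =ᵐ[μ] fun t => b t * x t) : ‖w‖ = ‖x‖ := by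
  rw [Lp.norm_def, Lp.norm_def, eLpNorm_congr_ae hw]
  congr 1
  apply eLpNorm_congr_norm_ae
  filter_upwards [hb] with t ht
  rw [norm_mul, ht, one_mul]

lemma inner_eq_of_ae_eq_mul {b : α → ℂ} (hb : ∀ᵐ t ∂μ, ‖b t‖ = 1) {g g' x v : Lp ℂ 2 μ}
    (hg : ⇑g' =ᵐ[μ] fun t => b t * g t) (hx : ⇑x =ᵐ[μ] fun t => b t * v t) :
    inner ℂ g v = inner ℂ g' x := by
  rw [L2.inner_def, L2.inner_def]
  apply integral_congr_ae
  filter_upwards [hb, hg, hx] with t hbt hgt hxt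
  have hbb : conj (b t) * b t = 1 := by simp [conj_mul', hbt]
  rw [RCLike.inner_apply, RCLike.inner_apply, hgt, hxt, map_mul]
  linear_combination -(v t * conj (g t)) * hbb

lemma integrable_mul_conj_mul_conj {u f b : α → ℂ} (hu : MemLp u 2 μ) (hf : MemLp f 2 μ)
    (hb : AEStronglyMeasurable b μ) (hb1 : ∀ᵐ t ∂μ, ‖b t‖ ≤ 1) :
    Integrable (fun t => u t * conj (f t) * conj (b t)) μ :=
  (hu.integrable_mul hf.star).mul_bdd hb.star (by simpa using hb1)

end LpMultiplier

section Fourier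

lemma norm_fourier_apply {T : ℝ} (n : ℤ) (x : AddCircle T) : ‖fourier n x‖ = 1 :=
  Circle.norm_coe _

variable {T : ℝ} [Fact (0 < T)]

lemma fourierCoeff_eq_inner_fourierLp (f : Lp ℂ 2 (haarAddCircle (T := T))) (n : ℤ) :
    fourierCoeff (⇑f) n = inner ℂ (fourierLp 2 n) f := by
  rw [← fourierBasis_repr, fourierBasis.repr_apply_apply, coe_fourierBasis]

lemma Lp.ext_fourierCoeff {f g : Lp ℂ 2 (haarAddCircle (T := T))}
    (h : ∀ n, fourierCoeff (⇑f) n = fourierCoeff (⇑g) n) : f = g :=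
  fourierBasis.repr.injective <| lp.ext <| funext fun n => by
    rw [fourierBasis_repr, fourierBasis_repr, h]

lemma fourierCoeff_mul_fourier (a : AddCircle T → ℂ) (n m : ℤ) :
    fourierCoeff (fun x => a x * fourier n x) m = fourierCoeff a (m - n) := by
  refine integral_congr_ae (Filter.Eventually.of_forall fun x => ?_)
  simp only [smul_eq_mul, show -(m - n) = -m + n by ring, fourier_add]
  ring

end Fourier

lemma isHardy_fourierLp_s14 {n : ℤ} (hn : 0 ≤ n) : IsHardy (fourierLp 2 n) := by
  intro m hm
  rw [fourierCoeff_congr_ae (coeFn_fourierLp 2 n), fourierCoeff_fourier,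
    Pi.single_eq_of_ne (by omega)]

lemma IsHardyFun.isHardy_of_ae_eq_mul_fourierLp {a : Tc → ℂ} (ha : IsHardyFun a) {n : ℤ}
    (hn : 0 ≤ n) {g : HL2} (hg : ⇑g =ᵐ[haarT] fun x => a x * (fourierLp 2 n : HL2) x) :
    IsHardy g := by
  intro m hm
  have hg' : ⇑g =ᵐ[haarT] fun x => a x * fourier n x := by
    filter_upwards [hg, coeFn_fourierLp 2 n] with x hgx hex
    rw [hgx, hex]
  rw [fourierCoeff_congr_ae hg', fourierCoeff_mul_fourier]
  exact ha _ (by omega)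

namespace IsSzego

variable {P : HL2 →L[ℂ] HL2}

lemma inner_apply (hP : IsSzego P) {g : HL2} (hg : IsHardy g) (v : HL2) :
    inner ℂ g (P v) = inner ℂ g v := by
  rw [← sub_eq_zero, ← inner_sub_right, ← neg_sub, inner_neg_right, hP.2 v g hg, neg_zero]

lemma apply_of_isHardy (hP : IsSzego P) {x : HL2} (hx : IsHardy x) : P x = x := by
  have h : inner ℂ (x - P x) (x - P x) = 0 := by
    rw [inner_sub_left, hP.2 x x hx, hP.2 x (P x) (hP.1 x), sub_zero]
  exact (sub_eq_zero.mp (inner_self_eq_zero.mp h)).symm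

lemma apply_eq_self_of_norm_le (hP : IsSzego P) {v : HL2} (hle : ‖v‖ ≤ ‖P v‖) : P v = v := by
  have hpyth := norm_add_sq_eq_norm_sq_add_norm_sq_of_inner_eq_zero (P v) (v - P v)
    (hP.2 v (P v) (hP.1 v))
  rw [add_sub_cancel] at hpyth
  have h0 : ‖v - P v‖ = 0 := by
    nlinarith [norm_nonneg (v - P v), norm_nonneg (P v), norm_nonneg v]
  exact (sub_eq_zero.mp (norm_eq_zero.mp h0)).symm

end IsSzego

namespace IsHankelOp

variable {u : Tc → ℂ} {H : HL2 → HL2} {P : HL2 →L[ℂ] HL2} {a : Tc → ℂ}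

lemma isHardy_apply (hH : IsHankelOp u H) (f : HL2) : IsHardy (H f) :=
  hH.2.2.2.2.2.1 f

lemma inner_fourierLp_apply_mul (hH : IsHankelOp u H) (ha : IsInnerF a) {n : ℤ} (hn : 0 ≤ n)
    {h w g : HL2} (hw : ⇑w =ᵐ[haarT] fun x => a x * h x)
    (hg : ⇑g =ᵐ[haarT] fun x => a x * (fourierLp 2 n : HL2) x) :
    inner ℂ (fourierLp 2 n : HL2) (H w) = inner ℂ g (H h) := by
  obtain ⟨hu, -, -, -, -, -, hform⟩ := hH
  obtain ⟨-, haU, haH⟩ := ha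
  have hen : ∀ᵐ x ∂haarT, ‖(fourierLp 2 n : HL2) x‖ = 1 := by
    filter_upwards [coeFn_fourierLp 2 n] with x hx
    rw [hx, norm_fourier_apply]
  have hgU : ∀ᵐ x ∂haarT, ‖g x‖ ≤ 1 := by
    filter_upwards [hg, haU, hen] with x hgx hax hex
    rw [hgx, norm_mul, hax, hex, one_mul]
  rw [hform w _ (isHardy_fourierLp_s14 hn) (integrable_mul_conj_mul_conj hu (Lp.memLp w)
      (Lp.aestronglyMeasurable _) (hen.mono fun _ => le_of_eq)),
    hform h g (haH.isHardy_of_ae_eq_mul_fourierLp hn hg)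
      (integrable_mul_conj_mul_conj hu (Lp.memLp h) (Lp.aestronglyMeasurable _) hgU)]
  apply integral_congr_ae
  filter_upwards [hw, hg] with x hwx hgx
  rw [hwx, hgx, map_mul, map_mul]
  ring

theorem apply_mul_eq (hH : IsHankelOp u H) (hP : IsSzego P)
    (ha : IsInnerF a) {h w v : HL2} (hw : ⇑w =ᵐ[haarT] fun x => a x * h x)
    (hv : ⇑(H h) =ᵐ[haarT] fun x => a x * v x) :
    H w = P v := by
  refine Lp.ext_fourierCoeff fun n => ?_
  rcases lt_or_ge n 0 with hn | hn
  · rw [hH.isHardy_apply w n hn, hP.1 v n hn]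
  obtain ⟨g, hg⟩ := exists_ae_eq_mul_of_norm_le_one ha.1 (ha.2.1.mono fun _ => le_of_eq)
    (fourierLp 2 n : HL2)
  rw [fourierCoeff_eq_inner_fourierLp, fourierCoeff_eq_inner_fourierLp,
    hH.inner_fourierLp_apply_mul ha hn hw hg, hP.inner_apply (isHardy_fourierLp_s14 hn),
    inner_eq_of_ae_eq_mul ha.2.1 hg hv]

lemma apply_ae_eq_mul_of_norm_le (hH : IsHankelOp u H) (hP : IsSzego P)
    (ha : IsInnerF a) {f f₀ : HL2} (hfac : ⇑f =ᵐ[haarT] fun x => a x * f₀ x)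
    (hle : ‖H f₀‖ ≤ ‖H f‖) :
    ⇑(H f₀) =ᵐ[haarT] fun x => a x * (H f) x := by
  obtain ⟨v, hv⟩ := exists_ae_eq_mul_of_norm_le_one ha.1.star
    (ha.2.1.mono fun _ h => by simp [h]) (H f₀)
  have hHv : ⇑(H f₀) =ᵐ[haarT] fun x => a x * v x := by
    filter_upwards [hv, ha.2.1] with x hvx hax
    rw [hvx, ← mul_assoc]
    simp [mul_conj', hax]
  have hHf : H f = P v := hH.apply_mul_eq hP ha hfac hHv
  have hPv : P v = v := hP.apply_eq_self_of_norm_le <| by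
    rwa [← hHf, ← norm_eq_of_ae_eq_mul ha.2.1 hHv]
  rwa [hHf, hPv]

end IsHankelOp

lemma mul_norm_le_norm_of_apply_apply_eq {E : Type*} [NormedAddCommGroup E] [NormedSpace ℂ E]
    {H : E → E} {s : ℝ} (hnorm : ∀ f, ‖H f‖ ≤ s * ‖f‖) {f : E}
    (hf : H (H f) = ((s : ℂ) ^ 2) • f) : s * ‖f‖ ≤ ‖H f‖ := by
  have hsq : s ^ 2 * ‖f‖ ≤ s * ‖H f‖ := by
    simpa [hf, norm_smul, sq_abs] using hnorm (H f)
  rcases le_or_gt s 0 with hs | hs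
  · nlinarith [norm_nonneg f, norm_nonneg (H f)]
  · nlinarith [norm_nonneg f]

theorem inner_divisor_stays_in_Schmidt_space_general
    (u : Tc → ℂ) (H : HL2 → HL2) (hH : IsHankelOp u H)
    (P : HL2 →L[ℂ] HL2) (hP : IsSzego P)
    (s : ℝ)
    (hnorm : ∀ f : HL2, ‖H f‖ ≤ s * ‖f‖)
    (f f₀ : HL2) (a : Tc → ℂ) (ha : IsInnerF a) (hf₀ : IsHardy f₀)
    (hfac : ⇑f =ᵐ[haarT] fun x => a x * f₀ x)
    (hfE : H (H f) = ((s : ℂ) ^ 2) • f) :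
    H (H f₀) = ((s : ℂ) ^ 2) • f₀ ∧
    ∀ w : HL2, (⇑w =ᵐ[haarT] fun x => a x * (H f) x) → H f₀ = P w := by
  have hHf₀ : ⇑(H f₀) =ᵐ[haarT] fun x => a x * (H f) x :=
    hH.apply_ae_eq_mul_of_norm_le hP ha hfac <| calc
      ‖H f₀‖ ≤ s * ‖f₀‖ := hnorm f₀
      _ = s * ‖f‖ := by rw [norm_eq_of_ae_eq_mul ha.2.1 hfac]
      _ ≤ ‖H f‖ := mul_norm_le_norm_of_apply_apply_eq hnorm hfE
  have hHHf : ⇑(H (H f)) =ᵐ[haarT] fun x => a x * (((s : ℂ) ^ 2) • f₀) x := by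
    filter_upwards [hfE ▸ Lp.coeFn_smul ((s : ℂ) ^ 2) f, Lp.coeFn_smul ((s : ℂ) ^ 2) f₀, hfac]
      with x hfx hf₀x hfacx
    rw [hfx, hf₀x, Pi.smul_apply, Pi.smul_apply, hfacx, smul_eq_mul, smul_eq_mul]
    ring
  refine ⟨?_, fun w hw => ?_⟩
  · rw [hH.apply_mul_eq hP ha hHf₀ hHHf, P.map_smul, hP.apply_of_isHardy hf₀]
  · rw [Lp.ext (hw.trans hHf₀.symm), hP.apply_of_isHardy (hH.isHardy_apply f₀)]

/-- if `s = ‖H_u‖`, `f ∈ E_H(s) = Ker(H_u² - s²I)` and `f = a f₀` with `a`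
inner, then `f₀ ∈ E_H(s)` and `H_u f₀ = T_a H_u f`. -/
theorem inner_divisor_stays_in_Schmidt_space
    (u : Tc → ℂ) (H : HL2 → HL2) (hH : IsHankelOp u H)
    (P : HL2 →L[ℂ] HL2) (hP : IsSzego P)
    (s : ℝ) (hs : 0 < s)
    (hnorm : ∀ f : HL2, ‖H f‖ ≤ s * ‖f‖)
    (f f₀ : HL2) (a : Tc → ℂ) (ha : IsInnerF a) (hf₀ : IsHardy f₀)
    (hfac : ⇑f =ᵐ[haarT] fun x => a x * f₀ x)
    (hfE : H (H f) = ((s : ℂ) ^ 2) • f) (hfne : f ≠ 0) :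
    H (H f₀) = ((s : ℂ) ^ 2) • f₀ ∧
    ∀ w : HL2, (⇑w =ᵐ[haarT] fun x => a x * (H f) x) → H f₀ = P w :=
  inner_divisor_stays_in_Schmidt_space_general u H hH P hP s hnorm f f₀ a ha hf₀ hfac hfE

end
end

section
/- Let φ be an inner function of finite degree k (i.e., dim K_φ = k where K_φ = H²(𝕋) ⊖ φH²(𝕋)). Then the linear span of the functions a - (a,φ)φ, where a ranges over all inner divisors of φ, has dimension k. In particular, the span of {a : a divides φ, a inner} has dimension k+1. -/
open MeasureTheory Complex Real ComplexConjugate AddCircle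

noncomputable section

/-- An inner function `a` divides the inner function `φ` (both given as boundary functions,
represented by L² elements): `φ = a·c` with `c` inner. -/
def InnerDivides (a φ : HL2) : Prop :=
  IsInnerF ⇑a ∧ ∃ c : HL2, IsInnerF ⇑c ∧ ⇑φ =ᵐ[haarT] fun x => a x * c x

open Filter Topology
open scoped InnerProductSpace

/-!
Each `a - (a, φ) φ` with `a ∣ φ` lies in `K_φ`, and `φ` itself spans a complement of `K_φ` in
the span of the divisors, so everything reduces to showing that these vectors span `K_φ`.
We enlarge shift-invariant subspaces `φH² ⊕ G`, `G ≤ K_φ`, one dimension at a time. The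
quotient `H² / (φH² ⊕ G)` is finite-dimensional, so the shift has an eigenvector `f` modulo
`φH² ⊕ G`, and `L = ℂ f + φH² ⊕ G` is a closed shift-invariant subspace of `H²`. By Beurling's
theorem `L = c H²` for an inner function `c`; then `c ∣ φ` because `φ ∈ L`, and `c ∉ φH² ⊕ G`
because `c H²` is the smallest closed invariant subspace containing `c`. Hence
`c - (c, φ) φ ∈ K_φ` enlarges `G`, and after `dim K_φ` steps `G = K_φ`.
-/

lemma inner_eq_integral_conj_mul {α : Type*} [MeasurableSpace α] {μ : Measure α}
    (f g : α →₂[μ] ℂ) : ⟪f, g⟫_ℂ = ∫ x, conj (f x) * g x ∂μ := by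
  rw [L2.inner_def]
  simp only [RCLike.inner_apply']

lemma LinearIsometry.isClosed_map {𝕜 E F : Type*} [RCLike 𝕜] [NormedAddCommGroup E]
    [NormedSpace 𝕜 E] [CompleteSpace E] [NormedAddCommGroup F] [NormedSpace 𝕜 F]
    (f : E →ₗᵢ[𝕜] F) {L : Submodule 𝕜 E} (hL : IsClosed (L : Set E)) :
    IsClosed (L.map f.toLinearMap : Set F) := by
  rw [Submodule.map_coe]
  exact f.isometry.isClosedEmbedding.isClosedMap _ hL

lemma conj_mul_self_of_norm_eq_one {z : ℂ} (hz : ‖z‖ = 1) : conj z * z = 1 := by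
  simp [Complex.conj_mul', hz]

section InvariantSubspaces

variable {K V : Type*} [Field K] [AddCommGroup V] [Module K V]

theorem Module.End.exists_sub_smul_mem_of_mem_invtSubmodule [IsAlgClosed K]
    {T : Module.End K V} {p : Submodule K V} (hp : p ∈ T.invtSubmodule)
    [FiniteDimensional K (V ⧸ p)] (hp_top : p ≠ ⊤) : ∃ v ∉ p, ∃ μ : K, T v - μ • v ∈ p := by
  have : Nontrivial (V ⧸ p) := Submodule.Quotient.nontrivial_iff.2 hp_top
  obtain ⟨μ, hμ⟩ := Module.End.exists_eigenvalue (p.mapQ p T hp)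
  obtain ⟨q, hq⟩ := hμ.exists_hasEigenvector
  obtain ⟨v, rfl⟩ := Submodule.Quotient.mk_surjective p q
  refine ⟨v, fun hv => hq.2 ((Submodule.Quotient.mk_eq_zero p).2 hv), μ, ?_⟩
  rw [← Submodule.Quotient.eq, Submodule.Quotient.mk_smul, ← hq.apply_eq_smul]
  rfl

lemma Module.End.span_singleton_sup_mem_invtSubmodule {T : Module.End K V}
    {p : Submodule K V} (hp : p ∈ T.invtSubmodule) {v : V} {μ : K} (hv : T v - μ • v ∈ p) :
    K ∙ v ⊔ p ∈ T.invtSubmodule := by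
  intro x hx
  obtain ⟨_, hy, z, hz, rfl⟩ := Submodule.mem_sup.1 hx
  obtain ⟨t, rfl⟩ := Submodule.mem_span_singleton.1 hy
  have : T (t • v + z) = (t * μ) • v + (t • (T v - μ • v) + T z) := by
    simp only [map_add, map_smul, smul_sub, mul_smul]
    abel
  rw [Submodule.mem_comap, this]
  exact Submodule.add_mem_sup (Submodule.smul_mem _ _ (Submodule.mem_span_singleton_self v))
    (p.add_mem (p.smul_mem t hv) (hp hz))

lemma Submodule.span_singleton_sup_eq_of_sub_mem {p : Submodule K V} {v w : V}
    (h : v - w ∈ p) : K ∙ v ⊔ p = K ∙ w ⊔ p := by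
  have key {v w : V} (h : v - w ∈ p) : K ∙ v ⊔ p ≤ K ∙ w ⊔ p := by
    refine sup_le ((Submodule.span_singleton_le_iff_mem _ _).2 ?_) le_sup_right
    rw [← sub_add_cancel v w, add_comm]
    exact Submodule.add_mem_sup (Submodule.mem_span_singleton_self w) h
  exact le_antisymm (key h) (key (by rwa [← neg_sub, p.neg_mem_iff]))

end InvariantSubspaces

section FourierUniqueness

variable {T : ℝ} [Fact (0 < T)]

lemma fourierCoeff_zero_eq_integral_s16 (u : AddCircle T → ℂ) :
    fourierCoeff u 0 = ∫ x, u x ∂haarAddCircle := by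
  simp [fourierCoeff]

lemma coeFn_fourierBasis (n : ℤ) :
    ⇑(fourierBasis n : Lp ℂ 2 (haarAddCircle (T := T))) =ᵐ[haarAddCircle] fourier n := by
  rw [coe_fourierBasis]
  exact coeFn_fourierLp 2 n

lemma eq_zero_of_fourierCoeff_eq_zero {f : Lp ℂ 2 (haarAddCircle (T := T))}
    (h : ∀ n, fourierCoeff f n = 0) : f = 0 := by
  refine fourierBasis.repr.injective (lp.ext (funext fun n => ?_))
  simp [fourierBasis_repr, h]

lemma integral_mul_eq_zero_of_fourierCoeff_eq_zero {f : AddCircle T → ℂ}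
    (hf : Integrable f haarAddCircle) (hc : ∀ n, fourierCoeff f n = 0) (g : C(AddCircle T, ℂ)) :
    ∫ x, g x * f x ∂haarAddCircle = 0 := by
  have hint (g : C(AddCircle T, ℂ)) : Integrable (fun x => g x * f x) haarAddCircle :=
    hf.bdd_mul g.continuous.aestronglyMeasurable (.of_forall g.norm_coe_le_norm)
  let Λ : C(AddCircle T, ℂ) →L[ℂ] ℂ := LinearMap.mkContinuous
    { toFun := fun g => ∫ x, g x * f x ∂haarAddCircle
      map_add' := fun g₁ g₂ => by
        simp only [ContinuousMap.add_apply, add_mul]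
        exact integral_add (hint g₁) (hint g₂)
      map_smul' := fun c g => by
        simp only [ContinuousMap.smul_apply, smul_eq_mul, mul_assoc, RingHom.id_apply]
        exact integral_const_mul c _ }
    (∫ x, ‖f x‖ ∂haarAddCircle) fun g => by
      rw [mul_comm, ← integral_const_mul]
      refine norm_integral_le_of_norm_le (hf.norm.const_mul _) (.of_forall fun x => ?_)
      rw [norm_mul]
      gcongr
      exact g.norm_coe_le_norm x
  have hΛ : Λ = 0 := by
    refine ContinuousLinearMap.ext_on
      (Submodule.dense_iff_topologicalClosure_eq_top.2 span_fourier_closure_eq_top) ?_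
    rintro _ ⟨m, rfl⟩
    simpa [Λ, fourierCoeff, neg_neg] using hc (-m)
  exact congr($hΛ g)

lemma setIntegral_eq_zero_of_fourierCoeff_eq_zero {f : AddCircle T → ℂ}
    (hf : Integrable f haarAddCircle) (hc : ∀ n, fourierCoeff f n = 0) {s : Set (AddCircle T)}
    (hs : IsClosed s) : ∫ x in s, f x ∂haarAddCircle = 0 := by
  let g (n : ℕ) : C(AddCircle T, ℂ) :=
    ⟨fun x => ((hs.apprSeq n x : ℝ) : ℂ), by fun_prop⟩
  have hlim : ∀ x, Tendsto (fun n => g n x * f x) atTop (𝓝 (s.indicator f x)) := by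
    intro x
    have h := ((continuous_ofReal.comp NNReal.continuous_coe).tendsto _).comp
      (tendsto_pi_nhds.1 (HasOuterApproxClosed.tendsto_apprSeq hs) x)
    by_cases hx : x ∈ s <;> simpa [g, hx] using h.mul_const (f x)
  have hbound (n : ℕ) : ∀ᵐ x ∂haarAddCircle, ‖g n x * f x‖ ≤ ‖f x‖ := .of_forall fun x => by
    rw [norm_mul]
    refine mul_le_of_le_one_left (norm_nonneg _) ?_
    simpa [g] using HasOuterApproxClosed.apprSeq_apply_le_one hs n x
  have h := tendsto_integral_of_dominated_convergence _
    (fun n => (g n).continuous.aestronglyMeasurable.mul hf.1) hf.norm hbound (.of_forall hlim)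
  rw [← integral_indicator hs.measurableSet]
  refine tendsto_nhds_unique h ?_
  simpa only [Pi.mul_apply, integral_mul_eq_zero_of_fourierCoeff_eq_zero hf hc] using
    tendsto_const_nhds

theorem ae_eq_zero_of_fourierCoeff_eq_zero {f : AddCircle T → ℂ}
    (hf : Integrable f haarAddCircle) (hc : ∀ n, fourierCoeff f n = 0) :
    f =ᵐ[haarAddCircle] 0 :=
  ae_eq_zero_of_forall_setIntegral_isClosed_eq_zero hf fun _ hs =>
    setIntegral_eq_zero_of_fourierCoeff_eq_zero hf hc hs

end FourierUniqueness

section MultiplicationOperators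

def IsUnimodular (θ : Tc → ℂ) : Prop :=
  AEStronglyMeasurable θ haarT ∧ ∀ᵐ x ∂haarT, ‖θ x‖ = 1

lemma IsInnerF.isUnimodular {θ : Tc → ℂ} (h : IsInnerF θ) : IsUnimodular θ := ⟨h.1, h.2.1⟩

lemma isUnimodular_fourier (n : ℤ) : IsUnimodular (fourier n : Tc → ℂ) :=
  ⟨(map_continuous _).aestronglyMeasurable, .of_forall fun _ => Circle.norm_coe _⟩

variable {θ : Tc → ℂ}

lemma IsUnimodular.eLpNorm_mul (hθ : IsUnimodular θ) (f : HL2) :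
    eLpNorm (fun x => θ x * f x) 2 haarT = eLpNorm f 2 haarT :=
  eLpNorm_congr_norm_ae (by filter_upwards [hθ.2] with x hx; simp [hx])

lemma IsUnimodular.memLp_mul (hθ : IsUnimodular θ) (f : HL2) :
    MemLp (fun x => θ x * f x) 2 haarT :=
  ⟨hθ.1.mul (Lp.aestronglyMeasurable f), hθ.eLpNorm_mul f ▸ (Lp.memLp f).2⟩

def mulUnimodular (hθ : IsUnimodular θ) : HL2 →ₗᵢ[ℂ] HL2 where
  toFun f := (hθ.memLp_mul f).toLp _
  map_add' f g := by
    refine Lp.ext ?_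
    filter_upwards [(hθ.memLp_mul f).coeFn_toLp, (hθ.memLp_mul g).coeFn_toLp,
      (hθ.memLp_mul (f + g)).coeFn_toLp, Lp.coeFn_add f g,
      Lp.coeFn_add ((hθ.memLp_mul f).toLp _) ((hθ.memLp_mul g).toLp _)] with x h₁ h₂ h₃ h₄ h₅
    simp only [h₁, h₂, h₃, h₄, h₅, Pi.add_apply, mul_add]
  map_smul' c f := by
    refine Lp.ext ?_
    filter_upwards [(hθ.memLp_mul f).coeFn_toLp, (hθ.memLp_mul (c • f)).coeFn_toLp,
      Lp.coeFn_smul c f, Lp.coeFn_smul c ((hθ.memLp_mul f).toLp _)] with x h₁ h₂ h₃ h₄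
    simp only [h₁, h₂, h₃, h₄, Pi.smul_apply, smul_eq_mul, RingHom.id_apply]
    ring
  norm_map' f := by
    change ‖(hθ.memLp_mul f).toLp _‖ = ‖f‖
    rw [Lp.norm_toLp, hθ.eLpNorm_mul, Lp.norm_def]

lemma coeFn_mulUnimodular (hθ : IsUnimodular θ) (f : HL2) :
    ⇑(mulUnimodular hθ f) =ᵐ[haarT] fun x => θ x * f x :=
  (hθ.memLp_mul f).coeFn_toLp

lemma inner_mulUnimodular_left (hθ : IsUnimodular θ) (f g : HL2) :
    ⟪mulUnimodular hθ f, g⟫_ℂ = ∫ x, conj (θ x * f x) * g x ∂haarT := by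
  rw [inner_eq_integral_conj_mul]
  refine integral_congr_ae ?_
  filter_upwards [coeFn_mulUnimodular hθ f] with x hx
  rw [hx]

def fourierMul (n : ℤ) : HL2 →ₗᵢ[ℂ] HL2 := mulUnimodular (isUnimodular_fourier n)

lemma coeFn_fourierMul (n : ℤ) (f : HL2) :
    ⇑(fourierMul n f) =ᵐ[haarT] fun x => fourier n x * f x :=
  coeFn_mulUnimodular _ f

lemma fourierMul_zero (f : HL2) : fourierMul 0 f = f := by
  refine Lp.ext ?_
  filter_upwards [coeFn_fourierMul 0 f] with x hx
  rw [hx, fourier_zero, one_mul]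

lemma fourierMul_fourierMul (m n : ℤ) (f : HL2) :
    fourierMul m (fourierMul n f) = fourierMul (m + n) f := by
  refine Lp.ext ?_
  filter_upwards [coeFn_fourierMul m (fourierMul n f), coeFn_fourierMul n f,
    coeFn_fourierMul (m + n) f] with x h₁ h₂ h₃
  rw [h₁, h₂, h₃, fourier_add, mul_assoc]

lemma inner_fourierMul_left (n : ℤ) (f g : HL2) :
    ⟪fourierMul n f, g⟫_ℂ = ⟪f, fourierMul (-n) g⟫_ℂ := by
  rw [← (fourierMul n).inner_map_map f, fourierMul_fourierMul, add_neg_cancel, fourierMul_zero]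

lemma inner_fourierMul_eq_fourierCoeff (n : ℤ) (f g : HL2) :
    ⟪fourierMul n f, g⟫_ℂ = fourierCoeff (fun x => conj (f x) * g x) n := by
  rw [fourierMul, inner_mulUnimodular_left, fourierCoeff]
  congr 1 with x
  rw [fourier_neg, smul_eq_mul, map_mul]
  ring

lemma fourierCoeff_fourierMul (n : ℤ) (f : HL2) (m : ℤ) :
    fourierCoeff (fourierMul n f) m = fourierCoeff f (m - n) := by
  rw [fourierCoeff_congr_ae (coeFn_fourierMul n f), fourierCoeff, fourierCoeff]
  congr 1 with x
  rw [smul_eq_mul, smul_eq_mul, show -(m - n) = -m + n by ring, fourier_add, mul_assoc]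

lemma mulUnimodular_fourierBasis {c : HL2} (hc : IsUnimodular c) (n : ℤ) :
    mulUnimodular hc (fourierBasis n) = fourierMul n c := by
  refine Lp.ext ?_
  filter_upwards [coeFn_mulUnimodular hc (fourierBasis n), coeFn_fourierMul n c,
    coeFn_fourierBasis n] with x h₁ h₂ h₃
  rw [h₁, h₂, h₃, mul_comm]

lemma IsUnimodular.norm_eq_one {c : HL2} (hc : IsUnimodular c) : ‖c‖ = 1 := by
  rw [← fourierMul_zero c, ← mulUnimodular_fourierBasis hc, LinearIsometry.norm_map,
    fourierBasis.orthonormal.1 0]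

lemma IsUnimodular.ne_zero {c : HL2} (hc : IsUnimodular c) : c ≠ 0 :=
  ne_zero_of_norm_ne_zero (by rw [hc.norm_eq_one]; exact one_ne_zero)

lemma fourierMul_mulUnimodular (hθ : IsUnimodular θ) (n : ℤ) (f : HL2) :
    fourierMul n (mulUnimodular hθ f) = mulUnimodular hθ (fourierMul n f) := by
  refine Lp.ext ?_
  filter_upwards [coeFn_fourierMul n (mulUnimodular hθ f), coeFn_mulUnimodular hθ f,
    coeFn_mulUnimodular hθ (fourierMul n f), coeFn_fourierMul n f] with x h₁ h₂ h₃ h₄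
  rw [h₁, h₂, h₃, h₄, mul_left_comm]

lemma hasSum_mulUnimodular (hθ : IsUnimodular θ) (f : HL2) :
    HasSum (fun n => fourierBasis.repr f n • mulUnimodular hθ (fourierBasis n))
      (mulUnimodular hθ f) := by
  simpa using (fourierBasis.hasSum_repr f).mapL (mulUnimodular hθ).toContinuousLinearMap

lemma conj_mul_ae_eq_of_inner_fourierMul_eq {f g : HL2} {u : Tc → ℂ}
    (hu : Integrable u haarT) (h : ∀ n, ⟪fourierMul n f, g⟫_ℂ = fourierCoeff u n) :
    (fun x => conj (f x) * g x) =ᵐ[haarT] u := by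
  have hfg : Integrable (fun x => conj (f x) * g x) haarT := by
    simpa only [RCLike.inner_apply'] using L2.integrable_inner (𝕜 := ℂ) f g
  have h0 := ae_eq_zero_of_fourierCoeff_eq_zero (hfg.sub hu) fun n => by
    have := integral_sub (hfg.fourier_smul (-n)) (hu.fourier_smul (-n))
    simp only [← smul_sub] at this
    rw [fourierCoeff, Pi.sub_def, this, ← fourierCoeff, ← fourierCoeff,
      ← inner_fourierMul_eq_fourierCoeff, h, sub_self]
  filter_upwards [h0] with x hx
  exact sub_eq_zero.1 hx

def shift : Module.End ℂ HL2 := (fourierMul 1).toLinearMap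

lemma fourierMul_mem_of_mem_invtSubmodule {L : Submodule ℂ HL2} (hL : L ∈ shift.invtSubmodule)
    {f : HL2} (hf : f ∈ L) {n : ℤ} (hn : 0 ≤ n) : fourierMul n f ∈ L := by
  lift n to ℕ using hn
  induction n with
  | zero => simpa [fourierMul_zero] using hf
  | succ k ih =>
    have := hL ih
    rwa [Submodule.mem_comap, shift, LinearIsometry.coe_toLinearMap, fourierMul_fourierMul,
      add_comm] at this

lemma fourierMul_mem_map_shift {L : Submodule ℂ HL2} (hL : L ∈ shift.invtSubmodule) {f : HL2}
    (hf : f ∈ L) {n : ℤ} (hn : 1 ≤ n) : fourierMul n f ∈ L.map shift := by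
  refine ⟨fourierMul (n - 1) f, fourierMul_mem_of_mem_invtSubmodule hL hf (by omega), ?_⟩
  change fourierMul 1 (fourierMul (n - 1) f) = _
  rw [fourierMul_fourierMul, add_sub_cancel]

end MultiplicationOperators

section HardySpace

def hardySpace : Submodule ℂ HL2 where
  carrier := {f | IsHardy f}
  add_mem' {f g} hf hg n hn := by
    change fourierCoeff ⇑(f + g) n = 0
    rw [← fourierBasis_repr, map_add, lp.coeFn_add, Pi.add_apply, fourierBasis_repr,
      fourierBasis_repr, hf n hn, hg n hn, add_zero]
  zero_mem' n hn := by
    change fourierCoeff ⇑(0 : HL2) n = 0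
    rw [← fourierBasis_repr, map_zero, lp.coeFn_zero, Pi.zero_apply]
  smul_mem' c f hf n hn := by
    change fourierCoeff ⇑(c • f) n = 0
    rw [← fourierBasis_repr, map_smul, lp.coeFn_smul, Pi.smul_apply, fourierBasis_repr,
      hf n hn, smul_zero]

lemma mem_hardySpace {f : HL2} : f ∈ hardySpace ↔ ∀ n < 0, fourierCoeff f n = 0 := Iff.rfl

lemma isClosed_hardySpace : IsClosed (hardySpace : Set HL2) := by
  have : (hardySpace : Set HL2) = ⋂ n < (0 : ℤ), {f | ⟪fourierBasis n, f⟫_ℂ = 0} := by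
    ext f
    simp [mem_hardySpace, ← fourierBasis_repr, HilbertBasis.repr_apply_apply]
  rw [this]
  exact isClosed_biInter fun n _ =>
    isClosed_eq (continuous_const.inner continuous_id) continuous_const

lemma fourierBasis_mem_hardySpace {n : ℤ} (hn : 0 ≤ n) : fourierBasis n ∈ hardySpace := by
  intro m hm
  rw [← fourierBasis_repr, HilbertBasis.repr_self, lp.single_apply, Pi.single_apply,
    if_neg (by omega)]

lemma hardySpace_mem_invtSubmodule : hardySpace ∈ shift.invtSubmodule := fun f hf n hn => by
  change fourierCoeff (fourierMul 1 f) n = 0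
  rw [fourierCoeff_fourierMul]
  exact hf _ (by omega)

variable {θ : Tc → ℂ} {φ : HL2}

def mulHardy (hθ : IsUnimodular θ) : Submodule ℂ HL2 :=
  hardySpace.map (mulUnimodular hθ).toLinearMap

lemma self_mem_mulHardy {c : HL2} (hc : IsUnimodular c) : c ∈ mulHardy hc := by
  have := Submodule.mem_map_of_mem (f := (mulUnimodular hc).toLinearMap)
    (fourierBasis_mem_hardySpace le_rfl)
  rwa [LinearIsometry.coe_toLinearMap, mulUnimodular_fourierBasis, fourierMul_zero] at this

lemma isClosed_mulHardy (hθ : IsUnimodular θ) : IsClosed (mulHardy hθ : Set HL2) :=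
  (mulUnimodular hθ).isClosed_map isClosed_hardySpace

lemma mulHardy_mem_invtSubmodule (hθ : IsUnimodular θ) : mulHardy hθ ∈ shift.invtSubmodule := by
  rintro _ ⟨h, hh, rfl⟩
  exact ⟨fourierMul 1 h, hardySpace_mem_invtSubmodule hh, (fourierMul_mulUnimodular hθ 1 h).symm⟩

lemma mulHardy_le_of_mem {c : HL2} (hc : IsUnimodular c) {L : Submodule ℂ HL2}
    (hLc : IsClosed (L : Set HL2)) (hL : L ∈ shift.invtSubmodule) (hcL : c ∈ L) :
    mulHardy hc ≤ L := by
  rintro _ ⟨h, hh, rfl⟩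
  refine hLc.mem_of_tendsto (hasSum_mulUnimodular hc h)
    (.of_forall fun s => L.sum_mem fun n _ => ?_)
  rcases lt_or_ge n 0 with hn | hn
  · rw [fourierBasis_repr, hh n hn, zero_smul]
    exact L.zero_mem
  · rw [mulUnimodular_fourierBasis]
    exact L.smul_mem _ (fourierMul_mem_of_mem_invtSubmodule hL hcL hn)

lemma mulHardy_le_hardySpace {c : HL2} (hc : IsUnimodular c) (hcH : c ∈ hardySpace) :
    mulHardy hc ≤ hardySpace :=
  mulHardy_le_of_mem hc isClosed_hardySpace hardySpace_mem_invtSubmodule hcH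

lemma innerDivides_of_mem_mulHardy {c : HL2} (hc : IsInnerF c) (hφ : IsInnerF φ)
    (h : φ ∈ mulHardy hc.isUnimodular) : InnerDivides c φ := by
  obtain ⟨d, hd, rfl⟩ := h
  have hcd := coeFn_mulUnimodular hc.isUnimodular d
  refine ⟨hc, d, ⟨Lp.aestronglyMeasurable d, ?_, hd⟩, hcd⟩
  filter_upwards [hcd, hφ.2.1, hc.2.1] with x h₁ h₂ h₃
  rwa [LinearIsometry.coe_toLinearMap, h₁, norm_mul, h₃, one_mul] at h₂

lemma integral_mul_of_mem_hardySpace {c h : HL2} (hc : IsUnimodular c) (hcH : c ∈ hardySpace)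
    (hh : h ∈ hardySpace) : ∫ x, c x * h x ∂haarT = (∫ x, c x ∂haarT) * ∫ x, h x ∂haarT := by
  -- The `0`-th coefficient of `c h` is `∑ ĥ(n) ĉ(-n)`, and only `n = 0` contributes.
  have hsum := (hasSum_mulUnimodular hc h).mapL (innerSL ℂ (fourierBasis 0 : HL2))
  simp only [innerSL_apply_apply, inner_smul_right, ← HilbertBasis.repr_apply_apply,
    fourierBasis_repr, mulUnimodular_fourierBasis, fourierCoeff_fourierMul, zero_sub] at hsum
  rw [← fourierCoeff_zero_eq_integral_s16, ← fourierCoeff_congr_ae (coeFn_mulUnimodular hc h),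
    hsum.unique (hasSum_single 0 fun n hn => ?_), neg_zero, fourierCoeff_zero_eq_integral_s16,
    fourierCoeff_zero_eq_integral_s16, mul_comm]
  rcases lt_or_gt_of_ne hn with hn | hn
  · rw [hh n hn, zero_mul]
  · rw [hcH (-n) (by omega), mul_zero]

end HardySpace

section Beurling

lemma eq_bot_of_map_shift_eq {L : Submodule ℂ HL2} (hLH : L ≤ hardySpace)
    (hL : L.map shift = L) : L = ⊥ := by
  have hdiv (k : ℕ) : ∀ f ∈ L, ∃ g ∈ L, f = fourierMul k g := by
    induction k with
    | zero => exact fun f hf => ⟨f, hf, (fourierMul_zero f).symm⟩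
    | succ k ih =>
      intro f hf
      obtain ⟨g, hg, rfl⟩ := ih f hf
      rw [← hL] at hg
      obtain ⟨g', hg', rfl⟩ := hg
      refine ⟨g', hg', ?_⟩
      change fourierMul k (fourierMul 1 g') = _
      rw [fourierMul_fourierMul]
      push_cast
      ring_nf
  refine (Submodule.eq_bot_iff L).2 fun f hf => eq_zero_of_fourierCoeff_eq_zero fun m => ?_
  obtain ⟨g, hg, rfl⟩ := hdiv (m.toNat + 1) f hf
  rw [fourierCoeff_fourierMul]
  exact hLH hg _ (by omega)

lemma exists_norm_eq_one_mem_orthogonal_map_shift {L : Submodule ℂ HL2}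
    (hLc : IsClosed (L : Set HL2)) (hL : L ∈ shift.invtSubmodule) (hLH : L ≤ hardySpace)
    (hL0 : L ≠ ⊥) : ∃ c ∈ L, c ∈ (L.map shift)ᗮ ∧ ‖c‖ = 1 := by
  have : CompleteSpace (L.map shift) := ((fourierMul 1).isClosed_map hLc).completeSpace_coe
  have hdecomp := Submodule.sup_orthogonal_inf_of_hasOrthogonalProjection
    ((Module.End.mem_invtSubmodule_iff_map_le _).1 hL)
  obtain ⟨c, hc, hc0⟩ : ∃ c ∈ (L.map shift)ᗮ ⊓ L, c ≠ 0 := by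
    refine Submodule.exists_mem_ne_zero_of_ne_bot fun h => hL0 ?_
    rw [h, sup_bot_eq] at hdecomp
    exact eq_bot_of_map_shift_eq hLH hdecomp
  exact ⟨(‖c‖⁻¹ : ℂ) • c, L.smul_mem _ hc.2, Submodule.smul_mem _ _ hc.1,
    norm_smul_inv_norm hc0⟩

/-- The relations `⟪zⁿ c, c⟫ = δₙ₀` say that `|c|²` has the Fourier coefficients of `1`. -/
lemma isUnimodular_of_mem_orthogonal_map_shift {L : Submodule ℂ HL2}
    (hL : L ∈ shift.invtSubmodule) {c : HL2} (hcL : c ∈ L) (hcS : c ∈ (L.map shift)ᗮ)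
    (hc1 : ‖c‖ = 1) : IsUnimodular c := by
  have hcc : (fun x => conj (c x) * c x) =ᵐ[haarT] fourier 0 := by
    refine conj_mul_ae_eq_of_inner_fourierMul_eq
      ((map_continuous _).integrable_of_hasCompactSupport (.of_compactSpace _)) fun n => ?_
    rw [fourierCoeff_fourier, Pi.single_apply]
    rcases lt_trichotomy n 0 with hn | rfl | hn
    · rw [if_neg hn.ne, inner_fourierMul_left, ← inner_conj_symm,
        Submodule.inner_right_of_mem_orthogonal (fourierMul_mem_map_shift hL hcL (by omega))
          hcS, map_zero]
    · rw [if_pos rfl, fourierMul_zero, inner_self_eq_norm_sq_to_K, hc1]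
      norm_num
    · rw [if_neg hn.ne', Submodule.inner_right_of_mem_orthogonal
        (fourierMul_mem_map_shift hL hcL hn) hcS]
  refine ⟨Lp.aestronglyMeasurable c, ?_⟩
  filter_upwards [hcc] with x hx
  rw [Complex.conj_mul', fourier_zero] at hx
  exact (pow_eq_one_iff_of_nonneg (norm_nonneg _) two_ne_zero).1 (by exact_mod_cast hx)

theorem exists_isInnerF_eq_mulHardy {L : Submodule ℂ HL2} (hLc : IsClosed (L : Set HL2))
    (hL : L ∈ shift.invtSubmodule) (hLH : L ≤ hardySpace) (hL0 : L ≠ ⊥) :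
    ∃ (c : HL2) (hc : IsInnerF c), L = mulHardy hc.isUnimodular := by
  obtain ⟨c, hcL, hcS, hc1⟩ := exists_norm_eq_one_mem_orthogonal_map_shift hLc hL hLH hL0
  have hcU := isUnimodular_of_mem_orthogonal_map_shift hL hcL hcS hc1
  have hle := mulHardy_le_of_mem hcU hLc hL hcL
  refine ⟨c, ⟨hcU.1, hcU.2, hLH hcL⟩, le_antisymm ?_ hle⟩
  have : CompleteSpace (mulHardy hcU) := (isClosed_mulHardy hcU).completeSpace_coe
  suffices (mulHardy hcU)ᗮ ⊓ L = ⊥ by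
    rw [← Submodule.sup_orthogonal_inf_of_hasOrthogonalProjection hle, this, sup_bot_eq]
  refine (Submodule.eq_bot_iff _).2 fun r hr => Lp.ext ?_
  suffices (fun x => conj (c x) * r x) =ᵐ[haarT] 0 by
    filter_upwards [this, hcU.2, Lp.coeFn_zero ℂ 2 haarT] with x hx h1 h0
    rw [h0]
    simpa [show c x ≠ 0 by rintro h; simp [h] at h1] using hx
  -- `zⁿ c ∈ c H² ⊥ r` for `n ≥ 0`, and `z⁻ⁿ r ∈ z L ⊥ c` for `n < 0`.
  refine conj_mul_ae_eq_of_inner_fourierMul_eq (integrable_zero _ _ _) fun n => ?_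
  rw [show fourierCoeff (0 : Tc → ℂ) n = 0 by simp [fourierCoeff]]
  rcases lt_or_ge n 0 with hn | hn
  · rw [inner_fourierMul_left]
    exact Submodule.inner_left_of_mem_orthogonal
      (fourierMul_mem_map_shift hL hr.2 (by omega)) hcS
  · rw [← mulUnimodular_fourierBasis hcU]
    exact Submodule.inner_right_of_mem_orthogonal
      (Submodule.mem_map_of_mem (fourierBasis_mem_hardySpace hn)) hr.1

end Beurling

section ModelSpace

variable {θ : Tc → ℂ} {φ : HL2}

def modelSpace (hθ : IsUnimodular θ) : Submodule ℂ HL2 := hardySpace ⊓ (mulHardy hθ)ᗮ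

lemma memK_iff_mem_modelSpace (hθ : IsUnimodular θ) {f : HL2} :
    MemK θ f ↔ f ∈ modelSpace hθ := by
  refine ⟨fun ⟨hfH, hf⟩ => ⟨hfH, ?_⟩, fun ⟨hfH, hf⟩ => ⟨hfH, fun h w hh hw => ?_⟩⟩
  · rintro _ ⟨h, hh, rfl⟩
    exact hf h _ hh (coeFn_mulUnimodular hθ h)
  · rw [Lp.ext (hw.trans (coeFn_mulUnimodular hθ h).symm)]
    exact hf _ (Submodule.mem_map_of_mem hh)

lemma disjoint_modelSpace_mulHardy (hθ : IsUnimodular θ) :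
    Disjoint (modelSpace hθ) (mulHardy hθ) :=
  (Submodule.orthogonal_disjoint (mulHardy hθ)).symm.mono_left inf_le_right

lemma disjoint_modelSpace_span_singleton {c : HL2} (hc : IsUnimodular c) :
    Disjoint (modelSpace hc) (ℂ ∙ c) :=
  (disjoint_modelSpace_mulHardy hc).mono_right
    ((Submodule.span_singleton_le_iff_mem _ _).2 (self_mem_mulHardy hc))

lemma sup_inf_modelSpace (hθ : IsUnimodular θ) {G : Submodule ℂ HL2} (hG : G ≤ modelSpace hθ) :
    (mulHardy hθ ⊔ G) ⊓ modelSpace hθ = G := by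
  rw [sup_comm, sup_inf_assoc_of_le _ hG, inf_comm,
    (disjoint_modelSpace_mulHardy hθ).eq_bot, sup_bot_eq]

lemma hardySpace_eq_mulHardy_sup_modelSpace (hφ : IsInnerF φ) :
    hardySpace = mulHardy hφ.isUnimodular ⊔ modelSpace hφ.isUnimodular := by
  have : CompleteSpace (mulHardy hφ.isUnimodular) :=
    (isClosed_mulHardy hφ.isUnimodular).completeSpace_coe
  rw [modelSpace, inf_comm]
  exact (Submodule.sup_orthogonal_inf_of_hasOrthogonalProjection
    (mulHardy_le_hardySpace hφ.isUnimodular hφ.2.2)).symm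

lemma sub_inner_smul_mem_modelSpace (hφ : IsInnerF φ) {a : HL2} (ha : InnerDivides a φ) :
    a - ⟪φ, a⟫_ℂ • φ ∈ modelSpace hφ.isUnimodular := by
  obtain ⟨haI, d, hdI, hφad⟩ := ha
  refine ⟨Submodule.sub_mem _ haI.2.2 (Submodule.smul_mem _ _ hφ.2.2), ?_⟩
  rintro _ ⟨h, hh, rfl⟩
  have hda : ⟪mulUnimodular hφ.isUnimodular h, a⟫_ℂ = conj (∫ x, d x * h x ∂haarT) := by
    rw [inner_mulUnimodular_left, ← integral_conj]
    refine integral_congr_ae ?_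
    filter_upwards [hφad, haI.2.1] with x h₁ h₂
    rw [h₁, map_mul, map_mul, map_mul, mul_comm, ← mul_assoc, ← mul_assoc,
      mul_comm (a x), conj_mul_self_of_norm_eq_one h₂, one_mul]
  have hφφ : ⟪mulUnimodular hφ.isUnimodular h, φ⟫_ℂ = conj (∫ x, h x ∂haarT) := by
    rw [inner_mulUnimodular_left, ← integral_conj]
    refine integral_congr_ae ?_
    filter_upwards [hφ.2.1] with x h₁
    rw [map_mul, mul_right_comm, conj_mul_self_of_norm_eq_one h₁, one_mul]
  have hφa : ⟪φ, a⟫_ℂ = conj (∫ x, d x ∂haarT) := by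
    rw [inner_eq_integral_conj_mul, ← integral_conj]
    refine integral_congr_ae ?_
    filter_upwards [hφad, haI.2.1] with x h₁ h₂
    rw [h₁, map_mul, mul_right_comm, conj_mul_self_of_norm_eq_one h₂, one_mul]
  rw [LinearIsometry.coe_toLinearMap, inner_sub_right, inner_smul_right, hda, hφφ, hφa,
    integral_mul_of_mem_hardySpace hdI.isUnimodular hdI.2.2 hh, map_mul, sub_self]

end ModelSpace

section Divisors

variable {φ : HL2}

def orthoDivisors (φ : HL2) : Set HL2 :=
  {g | ∃ a : HL2, InnerDivides a φ ∧ g = a - ⟪φ, a⟫_ℂ • φ}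

lemma exists_shift_sub_smul_mem (hφ : IsInnerF φ)
    [FiniteDimensional ℂ (modelSpace hφ.isUnimodular)] {L : Submodule ℂ HL2}
    (hFL : mulHardy hφ.isUnimodular ≤ L) (hLH : L < hardySpace)
    (hL : L ∈ shift.invtSubmodule) :
    ∃ f ∈ hardySpace, f ∉ L ∧ ∃ μ : ℂ, shift f - μ • f ∈ L := by
  let S : Module.End ℂ hardySpace := shift.restrict fun _ hf => hardySpace_mem_invtSubmodule hf
  let p := L.comap hardySpace.subtype
  have hp : p ∈ S.invtSubmodule := fun _ hf => hL hf
  have : FiniteDimensional ℂ (hardySpace ⧸ p) := by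
    refine Module.Finite.of_surjective
      (p.mkQ ∘ₗ Submodule.inclusion
        (show modelSpace hφ.isUnimodular ≤ hardySpace from inf_le_left)) ?_
    intro q
    obtain ⟨⟨x, hx⟩, rfl⟩ := Submodule.Quotient.mk_surjective p q
    rw [hardySpace_eq_mulHardy_sup_modelSpace hφ] at hx
    obtain ⟨y, hy, z, hz, rfl⟩ := Submodule.mem_sup.1 hx
    refine ⟨⟨z, hz⟩, (Submodule.Quotient.eq p).2 ?_⟩
    change z - (y + z) ∈ L
    rw [sub_add_cancel_right]
    exact L.neg_mem (hFL hy)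
  have hp_top : p ≠ ⊤ := by
    rw [Ne, Submodule.comap_subtype_eq_top]
    exact hLH.not_ge
  obtain ⟨⟨f, hfH⟩, hfp, μ, hμ⟩ := Module.End.exists_sub_smul_mem_of_mem_invtSubmodule hp hp_top
  exact ⟨f, hfH, hfp, μ, hμ⟩

lemma exists_innerDivides_notMem (hφ : IsInnerF φ)
    [FiniteDimensional ℂ (modelSpace hφ.isUnimodular)] {L : Submodule ℂ HL2}
    (hLc : IsClosed (L : Set HL2)) (hFL : mulHardy hφ.isUnimodular ≤ L) (hLH : L < hardySpace)
    (hL : L ∈ shift.invtSubmodule) :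
    ∃ a, InnerDivides a φ ∧ a ∉ L ∧ ℂ ∙ a ⊔ L ∈ shift.invtSubmodule := by
  obtain ⟨f, hfH, hfL, μ, hμ⟩ := exists_shift_sub_smul_mem hφ hFL hLH hL
  have hφL : φ ∈ ℂ ∙ f ⊔ L :=
    Submodule.mem_sup_right (hFL (self_mem_mulHardy hφ.isUnimodular))
  have hL'c : IsClosed ((ℂ ∙ f ⊔ L : Submodule ℂ HL2) : Set HL2) := by
    rw [sup_comm]
    exact L.isClosed_sup_finiteDimensional _ hLc
  obtain ⟨c, hc, hL'⟩ := exists_isInnerF_eq_mulHardy hL'c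
    (Module.End.span_singleton_sup_mem_invtSubmodule hL hμ)
    (sup_le ((Submodule.span_singleton_le_iff_mem _ _).2 hfH) hLH.le)
    ((Submodule.ne_bot_iff _).2 ⟨φ, hφL, hφ.isUnimodular.ne_zero⟩)
  have hcL' : c ∈ ℂ ∙ f ⊔ L := by
    rw [hL']
    exact self_mem_mulHardy hc.isUnimodular
  have hcL : c ∉ L := fun hcL => hfL <| (hL'.le.trans (mulHardy_le_of_mem _ hLc hL hcL))
    (Submodule.mem_sup_left (Submodule.mem_span_singleton_self f))
  refine ⟨c, innerDivides_of_mem_mulHardy hc hφ (hL' ▸ hφL), hcL, ?_⟩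
  have : ℂ ∙ c ⊔ L = ℂ ∙ f ⊔ L :=
    ((Submodule.covBy_span_singleton_sup hfL).eq_or_eq le_sup_right
      (sup_le ((Submodule.span_singleton_le_iff_mem _ _).2 hcL') le_sup_right)).resolve_left
      fun h => hcL (h ▸ Submodule.mem_sup_left (Submodule.mem_span_singleton_self c))
  rw [this]
  exact Module.End.span_singleton_sup_mem_invtSubmodule hL hμ

lemma exists_orthoDivisors_extension (hφ : IsInnerF φ)
    [FiniteDimensional ℂ (modelSpace hφ.isUnimodular)] {G : Submodule ℂ HL2}
    (hGK : G ≤ modelSpace hφ.isUnimodular) (hGK' : G ≠ modelSpace hφ.isUnimodular)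
    (hG : mulHardy hφ.isUnimodular ⊔ G ∈ shift.invtSubmodule) :
    ∃ v ∈ orthoDivisors φ, v ∈ modelSpace hφ.isUnimodular ∧ v ∉ G ∧
      mulHardy hφ.isUnimodular ⊔ (ℂ ∙ v ⊔ G) ∈ shift.invtSubmodule := by
  set F := mulHardy hφ.isUnimodular
  have : FiniteDimensional ℂ G := Submodule.finiteDimensional_of_le hGK
  have hLH : F ⊔ G < hardySpace := by
    refine lt_of_le_of_ne (sup_le (mulHardy_le_hardySpace _ hφ.2.2) (hGK.trans inf_le_left))
      fun h => hGK' ?_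
    rw [← sup_inf_modelSpace hφ.isUnimodular hGK, h]
    exact inf_eq_right.2 inf_le_left
  obtain ⟨a, ha, haL, hainv⟩ := exists_innerDivides_notMem hφ
    (F.isClosed_sup_finiteDimensional G (isClosed_mulHardy _)) le_sup_left hLH hG
  have hφF : ⟪φ, a⟫_ℂ • φ ∈ F := F.smul_mem _ (self_mem_mulHardy hφ.isUnimodular)
  refine ⟨_, ⟨a, ha, rfl⟩, sub_inner_smul_mem_modelSpace hφ ha, fun hv => haL ?_, ?_⟩
  · rw [← sub_add_cancel a (⟪φ, a⟫_ℂ • φ), add_comm]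
    exact Submodule.add_mem_sup hφF hv
  · rwa [sup_left_comm, ← sup_assoc, Submodule.span_singleton_sup_eq_of_sub_mem (w := a)
      (by rw [sub_sub_cancel_left]; exact F.neg_mem hφF), sup_assoc]

lemma modelSpace_le_sup_span_orthoDivisors (hφ : IsInnerF φ)
    [FiniteDimensional ℂ (modelSpace hφ.isUnimodular)] {G : Submodule ℂ HL2}
    (hGK : G ≤ modelSpace hφ.isUnimodular)
    (hG : mulHardy hφ.isUnimodular ⊔ G ∈ shift.invtSubmodule) :
    modelSpace hφ.isUnimodular ≤ G ⊔ Submodule.span ℂ (orthoDivisors φ) := by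
  induction hn : Module.finrank ℂ (modelSpace hφ.isUnimodular) - Module.finrank ℂ G
    using Nat.strong_induction_on generalizing G with
  | _ n ih =>
  rcases eq_or_ne G (modelSpace hφ.isUnimodular) with rfl | hGK'
  · exact le_sup_left
  obtain ⟨v, hvS, hvK, hvG, hinv⟩ := exists_orthoDivisors_extension hφ hGK hGK' hG
  have hG' : ℂ ∙ v ⊔ G ≤ modelSpace hφ.isUnimodular :=
    sup_le ((Submodule.span_singleton_le_iff_mem _ _).2 hvK) hGK
  have : FiniteDimensional ℂ ↥(ℂ ∙ v ⊔ G) := Submodule.finiteDimensional_of_le hG'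
  have hlt := Submodule.finrank_lt_finrank_of_lt (Submodule.covBy_span_singleton_sup hvG).lt
  have hle := Submodule.finrank_mono hG'
  calc modelSpace hφ.isUnimodular ≤ (ℂ ∙ v ⊔ G) ⊔ Submodule.span ℂ (orthoDivisors φ) :=
        ih _ (by omega) hG' hinv rfl
    _ ≤ G ⊔ Submodule.span ℂ (orthoDivisors φ) :=
        sup_le (sup_le ((Submodule.span_singleton_le_iff_mem _ _).2
          (Submodule.mem_sup_right (Submodule.subset_span hvS))) le_sup_left) le_sup_right

theorem span_orthoDivisors_eq_modelSpace (hφ : IsInnerF φ)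
    [FiniteDimensional ℂ (modelSpace hφ.isUnimodular)] :
    Submodule.span ℂ (orthoDivisors φ) = modelSpace hφ.isUnimodular := by
  refine le_antisymm (Submodule.span_le.2 ?_) ?_
  · rintro _ ⟨a, ha, rfl⟩
    exact sub_inner_smul_mem_modelSpace hφ ha
  · simpa using modelSpace_le_sup_span_orthoDivisors hφ bot_le
      (by simpa using mulHardy_mem_invtSubmodule hφ.isUnimodular)

theorem span_innerDivisors_eq (hφ : IsInnerF φ) :
    Submodule.span ℂ {a | InnerDivides a φ} =
      Submodule.span ℂ (orthoDivisors φ) ⊔ ℂ ∙ φ := by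
  have hφφ : φ ∈ Submodule.span ℂ {a | InnerDivides a φ} := Submodule.subset_span
    (innerDivides_of_mem_mulHardy hφ hφ (self_mem_mulHardy hφ.isUnimodular))
  refine le_antisymm (Submodule.span_le.2 fun a ha => ?_) (sup_le (Submodule.span_le.2 ?_)
    ((Submodule.span_singleton_le_iff_mem _ _).2 hφφ))
  · rw [SetLike.mem_coe, ← sub_add_cancel a (⟪φ, a⟫_ℂ • φ)]
    exact Submodule.add_mem_sup (Submodule.subset_span ⟨a, ha, rfl⟩)
      (Submodule.smul_mem _ _ (Submodule.mem_span_singleton_self φ))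
  · rintro _ ⟨a, ha, rfl⟩
    exact Submodule.sub_mem _ (Submodule.subset_span ha) (Submodule.smul_mem _ _ hφφ)

end Divisors

/-- for an inner function `φ` of finite degree `k` (i.e. `dim K_φ = k`), the
span of `{a - (a,φ)φ : a an inner divisor of φ}` has dimension `k`, and the span of the
inner divisors themselves has dimension `k + 1`. -/
theorem span_inner_divisors_rank
    (φe : HL2) (hφ : IsInnerF ⇑φe) (k : ℕ)
    (b : Fin k → HL2) (hbK : ∀ i, MemK (⇑φe) (b i))
    (hbspan : ∀ g : HL2, MemK (⇑φe) g → g ∈ Submodule.span ℂ (Set.range b))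
    (hbind : LinearIndependent ℂ b) :
    Module.rank ℂ ↥(Submodule.span ℂ
        {g : HL2 | ∃ a : HL2, InnerDivides a φe ∧ g = a - (inner ℂ φe a : ℂ) • φe})
      = (k : Cardinal) ∧
    Module.rank ℂ ↥(Submodule.span ℂ {a : HL2 | InnerDivides a φe})
      = ((k : Cardinal) + 1) := by
  have hKb : modelSpace hφ.isUnimodular = Submodule.span ℂ (Set.range b) :=
    le_antisymm (fun g hg => hbspan g ((memK_iff_mem_modelSpace _).2 hg))
      (Submodule.span_le.2 (Set.range_subset_iff.2 fun i => (memK_iff_mem_modelSpace _).1 (hbK i)))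
  have : FiniteDimensional ℂ (modelSpace hφ.isUnimodular) :=
    hKb ▸ FiniteDimensional.span_of_finite ℂ (Set.finite_range b)
  have hK : Module.finrank ℂ (modelSpace hφ.isUnimodular) = k := by
    rw [hKb, finrank_span_eq_card hbind, Fintype.card_fin]
  have hS := span_orthoDivisors_eq_modelSpace hφ
  have hsup := Submodule.finrank_sup_add_finrank_inf_eq (modelSpace hφ.isUnimodular) (ℂ ∙ φe)
  rw [(disjoint_modelSpace_span_singleton _).eq_bot, finrank_bot, add_zero, hK,
    finrank_span_singleton hφ.isUnimodular.ne_zero] at hsup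
  refine ⟨?_, ?_⟩
  · rw [show {g | _} = orthoDivisors φe from rfl, hS, ← Module.finrank_eq_rank, hK]
  · rw [span_innerDivisors_eq hφ, hS, ← Module.finrank_eq_rank, hsup]
    norm_cast

end
end
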